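/- arXiv:1607.08850 — 9 statements merged into one kernel-verified Lean document; each statement's English description precedes it below -/
import Mathlib

section
/- Let G be a connected finite graph of order n and let P be a set of exactly k ≥ 3 longest paths of G. For i = 1, …, k, let n_i be the number of vertices of G that lie on exactly i of the paths of P. If f(G,P) > 0, then (k-1)·n ≥ k·ℓ(G) + k + (k-2)·n₁ + (k-3)·n₂ + … + 1·n_{k-2}. -/
open SimpleGraph

/-- `w` is a longest path of `G`: it is a path and no path of `G` is longer. -/
def IsLongestPath {V : Type*} (G : SimpleGraph V) {u v : V} (w : G.Walk u v) : Prop :=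
  w.IsPath ∧ ∀ (a b : V) (q : G.Walk a b), q.IsPath → q.length ≤ w.length

/-- The distance `d_G(x, V(w))` from a vertex `x` to the vertex set of a walk `w`. -/
noncomputable def distToWalk {V : Type*} (G : SimpleGraph V) (x : V) {u v : V}
    (w : G.Walk u v) : ℕ :=
  sInf {d : ℕ | ∃ y ∈ w.support, G.dist x y = d}

/-- The path-distance-function `f(G, 𝒫)` of a family `𝒫` of paths of `G`. -/
noncomputable def pdf {V : Type*} (G : SimpleGraph V) {k : ℕ}
    (P : Fin k → Σ u : V, Σ v : V, G.Walk u v) : ℕ :=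
  sInf {s : ℕ | ∃ x : V, s = ∑ i, distToWalk G x (P i).2.2}

/-- The number of members of the family `P` whose vertex set contains `x`. -/
def countOn {V : Type*} [DecidableEq V] (G : SimpleGraph V) {k : ℕ}
    (P : Fin k → Σ u : V, Σ v : V, G.Walk u v) (x : V) : ℕ :=
  (Finset.univ.filter fun i => x ∈ (P i).2.2.support).card

/-- `|X¹ ∪ X² ∪ ... ∪ Xᵐ|` for the path `P i0`: the number of vertices of `P i0`
lying on at least `1` and at most `m` members of the family `P`. -/
def XUpTo {V : Type*} [DecidableEq V] (G : SimpleGraph V) {k : ℕ}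
    (P : Fin k → Σ u : V, Σ v : V, G.Walk u v) (i0 : Fin k) (m : ℕ) : ℕ :=
  ((P i0).2.2.support.toFinset.filter fun x => countOn G P x ∈ Finset.Icc 1 m).card

lemma distToWalk_eq_zero_of_mem {V : Type*} (G : SimpleGraph V) {x u v : V}
    {w : G.Walk u v} (hx : x ∈ w.support) : distToWalk G x w = 0 := by
  apply Nat.sInf_eq_zero.mpr
  exact Or.inl ⟨x, hx, SimpleGraph.dist_self⟩

/-- Lemma 4: if `f(G,𝒫) > 0` then
`(k-1)·n ≥ k·ℓ(G) + k + (k-2)·n₁ + (k-3)·n₂ + ... + 1·n_{k-2}`,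
where `n_i` is the number of vertices lying on exactly `i` of the paths of `𝒫`
and `ℓ(G)` is the length of a longest path (here the length of the member `P 0`). -/
theorem lemma_nbound {V : Type*} [Fintype V] [DecidableEq V] (G : SimpleGraph V)
    (hG : G.Connected) (k : ℕ) (hk : 3 ≤ k)
    (P : Fin k → Σ u : V, Σ v : V, G.Walk u v)
    (hinj : Function.Injective P) (hlong : ∀ i, IsLongestPath G (P i).2.2)
    (hf : 0 < pdf G P) :
    k * (P ⟨0, by omega⟩).2.2.length + k +
      ∑ i ∈ Finset.Icc 1 (k - 2),
        (k - 1 - i) * (Finset.univ.filter fun x : V => countOn G P x = i).card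
      ≤ (k - 1) * Fintype.card V := by
  -- every vertex misses some path
  have hle : ∀ x : V, countOn G P x ≤ k - 1 := by
    intro x
    have hne : ∑ i, distToWalk G x (P i).2.2 ≠ 0 := by
      intro h
      have h0 : (0 : ℕ) ∈ {s : ℕ | ∃ x : V, s = ∑ i, distToWalk G x (P i).2.2} :=
        ⟨x, h.symm⟩
      have := Nat.sInf_le h0
      unfold pdf at hf
      omega
    obtain ⟨i, hi⟩ : ∃ i, distToWalk G x (P i).2.2 ≠ 0 := by
      by_contra hc
      push_neg at hc
      exact hne (Finset.sum_eq_zero fun i _ => hc i)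
    have hx : x ∉ (P i).2.2.support := fun h => hi (distToWalk_eq_zero_of_mem G h)
    have hsub : (Finset.univ.filter fun j => x ∈ (P j).2.2.support) ⊆
        Finset.univ.erase i := by
      intro j hj
      simp only [Finset.mem_filter] at hj
      refine Finset.mem_erase.mpr ⟨?_, Finset.mem_univ j⟩
      rintro rfl; exact hx hj.2
    calc countOn G P x ≤ (Finset.univ.erase i).card := Finset.card_le_card hsub
      _ = k - 1 := by
          rw [Finset.card_erase_of_mem (Finset.mem_univ i)]
          simp
  have hlen : ∀ i : Fin k, (P i).2.2.length = (P ⟨0, by omega⟩).2.2.length := fun i =>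
    le_antisymm ((hlong _).2 _ _ _ (hlong i).1) ((hlong i).2 _ _ _ (hlong _).1)
  -- total count
  have hsum : ∑ x : V, countOn G P x = k * ((P ⟨0, by omega⟩).2.2.length + 1) := by
    unfold countOn
    simp only [Finset.card_filter]
    rw [Finset.sum_comm]
    have : ∀ i : Fin k, (∑ x : V, if x ∈ (P i).2.2.support then 1 else 0) =
        (P i).2.2.length + 1 := by
      intro i
      rw [← Finset.card_filter]
      have he : (Finset.univ.filter fun x : V => x ∈ (P i).2.2.support) =
          (P i).2.2.support.toFinset := by ext x; simp
      rw [he, List.toFinset_card_of_nodup (hlong i).1.support_nodup,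
        SimpleGraph.Walk.length_support, hlen i]
    rw [Finset.sum_congr rfl fun i _ => this i]
    simp only [hlen]
    simp [Finset.sum_const, mul_comm]
  -- rewrite the n_i sum as a sum over vertices
  have hni : ∑ i ∈ Finset.Icc 1 (k - 2),
      (k - 1 - i) * (Finset.univ.filter fun x : V => countOn G P x = i).card =
      ∑ x : V, if countOn G P x ∈ Finset.Icc 1 (k - 2) then k - 1 - countOn G P x
        else 0 := by
    have : ∀ i ∈ Finset.Icc 1 (k - 2),
        (k - 1 - i) * (Finset.univ.filter fun x : V => countOn G P x = i).card =
        ∑ x : V, if countOn G P x = i then k - 1 - i else 0 := by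
      intro i _
      rw [Finset.card_filter, Finset.mul_sum]
      simp [mul_ite]
    rw [Finset.sum_congr rfl this, Finset.sum_comm]
    refine Finset.sum_congr rfl fun x _ => ?_
    by_cases h : countOn G P x ∈ Finset.Icc 1 (k - 2)
    · rw [Finset.sum_ite_eq' (Finset.Icc 1 (k-2)) (countOn G P x)
        (fun i => k - 1 - i) |>.symm]
      refine Finset.sum_congr rfl fun i _ => ?_
      simp [eq_comm]
    · rw [Finset.sum_eq_zero, if_neg h]
      intro i hi
      rw [if_neg]
      rintro rfl; exact h hi
  have key : k * (P ⟨0, by omega⟩).2.2.length + k +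
      ∑ i ∈ Finset.Icc 1 (k - 2),
        (k - 1 - i) * (Finset.univ.filter fun x : V => countOn G P x = i).card =
      ∑ x : V, (countOn G P x +
        if countOn G P x ∈ Finset.Icc 1 (k - 2) then k - 1 - countOn G P x else 0) := by
    rw [Finset.sum_add_distrib, ← hni, hsum]; ring
  rw [key]
  calc ∑ x : V, (countOn G P x +
        if countOn G P x ∈ Finset.Icc 1 (k - 2) then k - 1 - countOn G P x else 0)
      ≤ ∑ _x : V, (k - 1) := by
        refine Finset.sum_le_sum fun x _ => ?_
        have := hle x
        by_cases h : countOn G P x ∈ Finset.Icc 1 (k - 2)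
        · simp only [Finset.mem_Icc] at h
          rw [if_pos]
          · omega
          · simpa [Finset.mem_Icc] using h
        · rw [if_neg h]; omega
    _ = (k - 1) * Fintype.card V := by
        rw [Finset.sum_const, Finset.card_univ, smul_eq_mul, mul_comm]
end

section
/- Let G be a connected finite graph and let P be a set of exactly k ≥ 3 longest paths of G with f(G,P) > 0. Then for every path P ∈ P there exist two edge-disjoint good paths on P (equivalently: if some P ∈ P admits a good path but no two edge-disjoint good paths, i.e., t'_P(P) = 1, then f(G,P) = 0). -/
open SimpleGraph

/-- `Q` is an infix (subpath) of the walk `W`. -/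
def IsInfixOf {V : Type*} (G : SimpleGraph V) {a b u v : V} (Q : G.Walk a b)
    (W : G.Walk u v) : Prop :=
  ∃ (w₁ : G.Walk u a) (w₂ : G.Walk b v), W = (w₁.append Q).append w₂

/-- `Q` is a good path on the member `P i0` of the family `P`: it is a subpath of `P i0`,
its end-vertices lie on two distinct other members `P i` and `P j`, it meets every other
member of the family, and no internal vertex of `Q` lies on `P i` or `P j`. -/
def IsGoodPath {V : Type*} (G : SimpleGraph V) {k : ℕ}
    (P : Fin k → Σ u : V, Σ v : V, G.Walk u v) (i0 : Fin k) {a b : V}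
    (Q : G.Walk a b) : Prop :=
  IsInfixOf G Q (P i0).2.2 ∧
  ∃ i j : Fin k, i ≠ i0 ∧ j ≠ i0 ∧ i ≠ j ∧
    a ∈ (P i).2.2.support ∧ b ∈ (P j).2.2.support ∧
    (∀ m : Fin k, m ≠ i0 → ∃ x ∈ Q.support, x ∈ (P m).2.2.support) ∧
    (∀ x ∈ Q.support, x ≠ a → x ≠ b →
      x ∉ (P i).2.2.support ∧ x ∉ (P j).2.2.support)

/-- `t'_𝒫(P i0)`: the maximum number of pairwise edge-disjoint good paths on `P i0`. -/
noncomputable def tprime {V : Type*} (G : SimpleGraph V) {k : ℕ}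
    (P : Fin k → Σ u : V, Σ v : V, G.Walk u v) (i0 : Fin k) : ℕ :=
  sSup {n : ℕ | ∃ Qs : Fin n → Σ a : V, Σ b : V, G.Walk a b,
    Function.Injective Qs ∧ (∀ t, IsGoodPath G P i0 (Qs t).2.2) ∧
    Pairwise fun s t => ∀ e ∈ (Qs s).2.2.edges, e ∉ (Qs t).2.2.edges}

/-!
Let `p = P i0` have length `n` and record, for every other member `P m`, the set `S m` of
positions along `p` where `P m` meets it; these sets are nonempty because two longest paths of a
connected graph intersect. Since `f(G, 𝒫) > 0`, no position lies in every `S m`.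
Let `b` be the largest of the minima of the `S m`, and `a` the smallest, over `m`, of the largest
element of `S m` that is at most `b`; then `a < b` and `p[a, b]` is a good path. The mirror
construction from the other end of `p` gives a second good path `p[a', b']`. Finally, a longest
path first meets another one at or before position `n / 2` and last meets it at or after `n / 2`
(otherwise an arm of `p` and the longer arm of `P m` would form a path longer than `n`), so
`b ≤ n / 2 ≤ a'` and the two good paths are edge-disjoint.
-/

section Intervals

open Finset OrderDual

variable {α ι : Type*} [LinearOrder α]

/-- The positions `[a, b]` of a good path on `P i0` when `S m` are the positions where `P m` meets
`P i0`. -/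
structure IsGoodInterval (S : ι → Finset α) (i j : ι) (a b : α) : Prop where
  lt : a < b
  ne : i ≠ j
  left_mem : a ∈ S i
  right_mem : b ∈ S j
  meets : ∀ m, ∃ s ∈ S m, a ≤ s ∧ s ≤ b
  left_avoid : ∀ s ∈ S i, a < s → s < b → False
  right_avoid : ∀ s ∈ S j, a < s → s < b → False

theorem IsGoodInterval.of_dual {S : ι → Finset α} {i j : ι} {a b : α}
    (h : IsGoodInterval (α := αᵒᵈ) S i j (toDual a) (toDual b)) : IsGoodInterval S j i b a where
  lt := h.lt
  ne := h.ne.symm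
  left_mem := h.right_mem
  right_mem := h.left_mem
  meets m := let ⟨s, hs, h₁, h₂⟩ := h.meets m; ⟨s, hs, h₂, h₁⟩
  left_avoid s hs h₁ h₂ := h.right_avoid s hs h₂ h₁
  right_avoid s hs h₁ h₂ := h.left_avoid s hs h₂ h₁

theorem exists_isGoodInterval_right_le [Fintype ι] [Nonempty α] (S : ι → Finset α)
    (hS : ∀ m, (S m).Nonempty) (hcommon : ∀ t, ∃ m, t ∉ S m) :
    ∃ i j a b, IsGoodInterval S i j a b ∧ ∀ s ∈ S j, b ≤ s := by
  have : Nonempty ι := (hcommon (Classical.arbitrary α)).nonempty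
  obtain ⟨j, -, hj⟩ := univ.exists_max_image (fun m => (S m).min' (hS m)) univ_nonempty
  set b := (S j).min' (hS j)
  have hT : ∀ m, ((S m).filter (· ≤ b)).Nonempty := fun m =>
    ⟨_, mem_filter.2 ⟨min'_mem _ _, hj m (mem_univ m)⟩⟩
  set g := fun m => ((S m).filter (· ≤ b)).max' (hT m)
  have hg : ∀ m, g m ∈ S m ∧ g m ≤ b := fun m => mem_filter.1 (max'_mem _ _)
  obtain ⟨i, -, hi⟩ := univ.exists_min_image g univ_nonempty
  have hab : g i < b := by
    refine (hg i).2.lt_of_ne fun hgb => ?_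
    obtain ⟨m, hm⟩ := hcommon b
    have : g m = b := le_antisymm (hg m).2 (hgb ▸ hi m (mem_univ m))
    exact hm (this ▸ (hg m).1)
  have hb_le : ∀ s ∈ S j, b ≤ s := fun s hs => min'_le _ _ hs
  refine ⟨i, j, g i, b, ⟨hab, ?_, (hg i).1, min'_mem _ _, ?_, ?_, ?_⟩, hb_le⟩
  · rintro rfl
    exact (hb_le _ (hg i).1).not_gt hab
  · exact fun m => ⟨g m, (hg m).1, hi m (mem_univ m), (hg m).2⟩
  · exact fun s hs has hsb => has.not_ge (le_max' _ _ (mem_filter.2 ⟨hs, hsb.le⟩))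
  · exact fun s hs _ hsb => hsb.not_ge (hb_le s hs)

theorem exists_isGoodInterval_le_left [Fintype ι] [Nonempty α] (S : ι → Finset α)
    (hS : ∀ m, (S m).Nonempty) (hcommon : ∀ t, ∃ m, t ∉ S m) :
    ∃ i j a b, IsGoodInterval S i j a b ∧ ∀ s ∈ S i, s ≤ a := by
  obtain ⟨j, i, b, a, h, ha⟩ := exists_isGoodInterval_right_le (α := αᵒᵈ) S hS hcommon
  exact ⟨i, j, ofDual a, ofDual b, h.of_dual, ha⟩

end Intervals

namespace SimpleGraph.Walk

variable {V : Type*} {G : SimpleGraph V} {u v w a b : V}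

theorem IsPath.append {p : G.Walk u v} {q : G.Walk v w} (hp : p.IsPath) (hq : q.IsPath)
    (hpq : ∀ x ∈ p.support, x ∈ q.support → x = v) : (p.append q).IsPath := by
  rw [isPath_def, support_append, List.nodup_append]
  have hq' := hq.support_nodup
  rw [← q.cons_tail_support, List.nodup_cons] at hq'
  refine ⟨hp.support_nodup, hq'.2, fun x hx y hy hxy => hq'.1 ?_⟩
  subst hxy
  exact hpq x hx (q.cons_tail_support ▸ List.mem_cons_of_mem _ hy) ▸ hy

theorem mem_support_take_iff {p : G.Walk u v} {n : ℕ} (hn : n ≤ p.length) {x : V} :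
    x ∈ (p.take n).support ↔ ∃ s ≤ n, p.getVert s = x := by
  simp only [mem_support_iff_exists_getVert, take_getVert, take_length]
  constructor
  · rintro ⟨s, rfl, hs⟩
    exact ⟨s, by omega, by congr 1; omega⟩
  · rintro ⟨s, hs, rfl⟩
    exact ⟨s, by congr 1; omega, by omega⟩

theorem mem_support_drop_iff {p : G.Walk u v} {n : ℕ} (hn : n ≤ p.length) {x : V} :
    x ∈ (p.drop n).support ↔ ∃ s, n ≤ s ∧ s ≤ p.length ∧ p.getVert s = x := by
  simp only [mem_support_iff_exists_getVert, drop_getVert, drop_length]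
  constructor
  · rintro ⟨s, rfl, hs⟩
    exact ⟨n + s, by omega, by omega, rfl⟩
  · rintro ⟨s, hns, hs, rfl⟩
    exact ⟨s - n, by congr 1; omega, by omega⟩

theorem mem_support_take_drop_iff {p : G.Walk u v} {a b : ℕ} (hab : a ≤ b) (hb : b ≤ p.length)
    {x : V} : x ∈ ((p.drop a).take (b - a)).support ↔ ∃ s, a ≤ s ∧ s ≤ b ∧ p.getVert s = x := by
  rw [mem_support_take_iff (by rw [drop_length]; omega)]
  simp only [drop_getVert]
  constructor
  · rintro ⟨s, hs, rfl⟩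
    exact ⟨a + s, by omega, by omega, rfl⟩
  · rintro ⟨s, has, hsb, rfl⟩
    exact ⟨s - a, by omega, by congr 1; omega⟩

theorem disjoint_edges_take_drop {p : G.Walk u v} (hp : p.IsPath) {a₁ b₁ a₂ b₂ : ℕ}
    (h : b₁ ≤ a₂) : ∀ e ∈ ((p.drop a₁).take (b₁ - a₁)).edges,
      e ∉ ((p.drop a₂).take (b₂ - a₂)).edges := by
  intro e he₁ he₂
  rw [edges_take, edges_drop, ← List.drop_take] at he₁
  rw [edges_take, edges_drop] at he₂
  exact List.disjoint_take_drop hp.isTrail.edges_nodup h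
    (List.drop_subset _ _ he₁) (List.take_subset _ _ he₂)

theorem sigma_ne_of_disjoint_edges {c d : V} {Q₁ : G.Walk a b} {Q₂ : G.Walk c d}
    (hQ₁ : ¬Q₁.Nil) (h : ∀ e ∈ Q₁.edges, e ∉ Q₂.edges) :
    (⟨a, b, Q₁⟩ : Σ u v, G.Walk u v) ≠ ⟨c, d, Q₂⟩ := by
  intro hQ
  have hedges : Q₁.edges = Q₂.edges := congrArg (fun Q : Σ u v, G.Walk u v => Q.2.2.edges) hQ
  obtain ⟨e, he⟩ := List.exists_mem_of_ne_nil _ (edges_eq_nil.not.mpr hQ₁)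
  exact h e he (hedges ▸ he)

variable [DecidableEq V]

def meetIndices (p : G.Walk u v) (q : G.Walk a b) : Finset ℕ :=
  (Finset.range (p.length + 1)).filter fun s => p.getVert s ∈ q.support

theorem mem_meetIndices {p : G.Walk u v} {q : G.Walk a b} {s : ℕ} :
    s ∈ p.meetIndices q ↔ s ≤ p.length ∧ p.getVert s ∈ q.support := by
  simp [meetIndices]

end SimpleGraph.Walk

namespace SimpleGraph.Connected

variable {V : Type*} {G : SimpleGraph V}

theorem exists_isPath_between (hG : G.Connected) {s t : Set V} (hs : s.Nonempty)
    (ht : t.Nonempty) : ∃ (c d : V) (R : G.Walk c d), R.IsPath ∧ c ∈ s ∧ d ∈ t ∧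
      (∀ x ∈ R.support, x ∈ s → x = c) ∧ (∀ x ∈ R.support, x ∈ t → x = d) := by
  classical
  have hex : ∃ n, ∃ c ∈ s, ∃ d ∈ t, ∃ R : G.Walk c d, R.length = n := by
    obtain ⟨c, hc⟩ := hs
    obtain ⟨d, hd⟩ := ht
    exact ⟨_, c, hc, d, hd, (hG c d).some, rfl⟩
  obtain ⟨c, hc, d, hd, R, hR⟩ := Nat.find_spec hex
  have hmin : ∀ c' ∈ s, ∀ d' ∈ t, ∀ W : G.Walk c' d', R.bypass.length ≤ W.length :=
    fun c' hc' d' hd' W =>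
      (R.length_bypass_le_length.trans_eq hR).trans (Nat.find_min' hex ⟨c', hc', d', hd', W, rfl⟩)
  refine ⟨c, d, R.bypass, R.bypass_isPath, hc, hd, fun x hx hxs => ?_, fun x hx hxt => ?_⟩
  · have hlen := congrArg Walk.length (R.bypass.take_spec hx)
    rw [Walk.length_append] at hlen
    have := hmin x hxs d hd (R.bypass.dropUntil x hx)
    have h0 : (R.bypass.takeUntil x hx).length = 0 := by omega
    exact (Walk.eq_of_length_eq_zero h0).symm
  · have hlen := congrArg Walk.length (R.bypass.take_spec hx)
    rw [Walk.length_append] at hlen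
    have := hmin c hc x hxt (R.bypass.takeUntil x hx)
    have h0 : (R.bypass.dropUntil x hx).length = 0 := by omega
    exact Walk.eq_of_length_eq_zero h0

end SimpleGraph.Connected

namespace IsLongestPath

open Walk

variable {V : Type*} {G : SimpleGraph V} {u v a b : V} {p : G.Walk u v} {q : G.Walk a b}

theorem length_eq (hp : IsLongestPath G p) (hq : IsLongestPath G q) : q.length = p.length :=
  le_antisymm (hp.2 _ _ q hq.1) (hq.2 _ _ p hp.1)

/-- Both arms of `q` at `x`, prolonged by `D`, are paths, so each is at most `p.length` long. -/
theorem two_mul_length_add_length_le (hp : IsLongestPath G p) {y x : V} {D : G.Walk y x}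
    (hD : D.IsPath) (hq : q.IsPath) (hx : x ∈ q.support)
    (hDq : ∀ z ∈ D.support, z ∈ q.support → z = x) :
    2 * D.length + q.length ≤ 2 * p.length := by
  classical
  have h₁ := hp.2 _ _ _ <| hD.append (hq.takeUntil hx).reverse fun z hz hz' =>
    hDq z hz (q.support_takeUntil_subset_support hx (by simpa using hz'))
  have h₂ := hp.2 _ _ _ <| hD.append (hq.dropUntil hx) fun z hz hz' =>
    hDq z hz (q.support_dropUntil_subset_support hx hz')
  have hlen := congrArg Walk.length (q.take_spec hx)
  simp only [Walk.length_append, Walk.length_reverse] at h₁ h₂ hlen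
  omega

theorem exists_mem_support_inter (hG : G.Connected) (hp : IsLongestPath G p)
    (hq : IsLongestPath G q) : ∃ x ∈ p.support, x ∈ q.support := by
  classical
  by_contra! hpq
  obtain ⟨c, d, R, hR, hc, hd, hRp, hRq⟩ :=
    hG.exists_isPath_between (s := {x | x ∈ p.support}) (t := {x | x ∈ q.support})
      ⟨u, p.start_mem_support⟩ ⟨a, q.start_mem_support⟩
  have harm : ∀ {y : V} (A : G.Walk y c), A.IsPath → (∀ z ∈ A.support, z ∈ p.support) →
      2 * (A.length + R.length) + q.length ≤ 2 * p.length := by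
    intro y A hA hAp
    rw [← Walk.length_append]
    refine hp.two_mul_length_add_length_le (hA.append hR fun z hz hz' => hRp z hz' (hAp z hz))
      hq.1 hd fun z hz hzq => ?_
    rcases (Walk.mem_support_append_iff _ _).1 hz with hz | hz
    · exact absurd hzq (hpq z (hAp z hz))
    · exact hRq z hz hzq
  have h₁ := harm _ (hp.1.takeUntil hc) fun z hz => p.support_takeUntil_subset_support hc hz
  have h₂ := harm _ (hp.1.dropUntil hc).reverse fun z hz =>
    p.support_dropUntil_subset_support hc (by simpa using hz)
  have hlen := congrArg Walk.length (p.take_spec hc)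
  simp only [Walk.length_append, Walk.length_reverse] at h₁ h₂ hlen
  have hR0 : R.length = 0 := by rw [length_eq hp hq] at h₁ h₂; omega
  exact hpq c hc (Walk.eq_of_length_eq_zero hR0 ▸ hd)

variable [DecidableEq V]

theorem meetIndices_nonempty (hG : G.Connected) (hp : IsLongestPath G p)
    (hq : IsLongestPath G q) : (p.meetIndices q).Nonempty := by
  obtain ⟨x, hxp, hxq⟩ := hp.exists_mem_support_inter hG hq
  obtain ⟨s, rfl, hs⟩ := mem_support_iff_exists_getVert.1 hxp
  exact ⟨s, mem_meetIndices.2 ⟨hs, hxq⟩⟩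

theorem two_mul_le_length_of_first_meet (hp : IsLongestPath G p) (hq : IsLongestPath G q)
    {s : ℕ} (hs : s ∈ p.meetIndices q) (hfirst : ∀ t ∈ p.meetIndices q, s ≤ t) :
    2 * s ≤ p.length := by
  obtain ⟨hsp, hsq⟩ := mem_meetIndices.1 hs
  have := hp.two_mul_length_add_length_le (hp.1.take s) hq.1 hsq fun z hz hzq => by
    obtain ⟨t, hts, rfl⟩ := (mem_support_take_iff hsp).1 hz
    rw [le_antisymm hts (hfirst t (mem_meetIndices.2 ⟨hts.trans hsp, hzq⟩))]
  rw [take_length, hp.length_eq hq] at this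
  omega

theorem length_le_two_mul_of_last_meet (hp : IsLongestPath G p) (hq : IsLongestPath G q)
    {s : ℕ} (hs : s ∈ p.meetIndices q) (hlast : ∀ t ∈ p.meetIndices q, t ≤ s) :
    p.length ≤ 2 * s := by
  obtain ⟨hsp, hsq⟩ := mem_meetIndices.1 hs
  have := hp.two_mul_length_add_length_le (hp.1.drop s).reverse hq.1 hsq fun z hz hzq => by
    rw [support_reverse, List.mem_reverse] at hz
    obtain ⟨t, hst, htp, rfl⟩ := (mem_support_drop_iff hsp).1 hz
    rw [le_antisymm (hlast t (mem_meetIndices.2 ⟨htp, hzq⟩)) hst]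
  rw [length_reverse, drop_length, hp.length_eq hq] at this
  omega

end IsLongestPath

section GoodPaths

open Walk

variable {V : Type*} {G : SimpleGraph V} {k : ℕ}

theorem pdf_eq_zero_of_forall_mem_support (P : Fin k → Σ u v : V, G.Walk u v) {x : V}
    (hx : ∀ i, x ∈ (P i).2.2.support) : pdf G P = 0 := by
  refine Nat.eq_zero_of_le_zero (Nat.sInf_le ⟨x, ?_⟩)
  refine (Finset.sum_eq_zero fun i _ => Nat.eq_zero_of_le_zero (Nat.sInf_le ?_)).symm
  exact ⟨x, hx i, dist_self⟩

variable [DecidableEq V]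

theorem isGoodPath_of_isGoodInterval {P : Fin k → Σ u v : V, G.Walk u v} {i0 : Fin k}
    {i j : {m // m ≠ i0}} {a b : ℕ}
    (h : IsGoodInterval (fun m : {m // m ≠ i0} => (P i0).2.2.meetIndices (P m).2.2) i j a b) :
    IsGoodPath G P i0 (((P i0).2.2.drop a).take (b - a)) := by
  set p := (P i0).2.2
  have hb : b ≤ p.length := (mem_meetIndices.1 h.right_mem).1
  have hend : (p.drop a).getVert (b - a) = p.getVert b := by
    rw [drop_getVert, Nat.add_sub_cancel' h.lt.le]
  have hsupp := fun x => mem_support_take_drop_iff (x := x) h.lt.le hb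
  refine ⟨(isSubwalk_take _ _).trans (isSubwalk_drop _ _), i, j, i.2, j.2,
    Subtype.coe_injective.ne h.ne, (mem_meetIndices.1 h.left_mem).2,
    hend ▸ (mem_meetIndices.1 h.right_mem).2, fun m hm => ?_, fun x hx hxa hxb => ?_⟩
  · obtain ⟨s, hs, has, hsb⟩ := h.meets ⟨m, hm⟩
    exact ⟨p.getVert s, (hsupp _).2 ⟨s, has, hsb, rfl⟩, (mem_meetIndices.1 hs).2⟩
  · obtain ⟨s, has, hsb, rfl⟩ := (hsupp x).1 hx
    have has' : a < s := has.lt_of_ne (by rintro rfl; exact hxa rfl)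
    have hsb' : s < b := hsb.lt_of_ne (by rintro rfl; exact hxb hend.symm)
    exact ⟨fun hi => h.left_avoid s (mem_meetIndices.2 ⟨hsb.trans hb, hi⟩) has' hsb',
      fun hj => h.right_avoid s (mem_meetIndices.2 ⟨hsb.trans hb, hj⟩) has' hsb'⟩

end GoodPaths

theorem lemma_two_edge_disjoint_good_paths_general {V : Type*} (G : SimpleGraph V)
    (hG : G.Connected) (k : ℕ)
    (P : Fin k → Σ u : V, Σ v : V, G.Walk u v)
    (hlong : ∀ i, IsLongestPath G (P i).2.2)
    (hf : 0 < pdf G P) (i0 : Fin k) :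
    ∃ (a b : V) (Q₁ : G.Walk a b) (c d : V) (Q₂ : G.Walk c d),
      IsGoodPath G P i0 Q₁ ∧ IsGoodPath G P i0 Q₂ ∧
      (⟨a, ⟨b, Q₁⟩⟩ : Σ u : V, Σ v : V, G.Walk u v) ≠ ⟨c, ⟨d, Q₂⟩⟩ ∧
      ∀ e ∈ Q₁.edges, e ∉ Q₂.edges := by
  classical
  let S : {m // m ≠ i0} → Finset ℕ := fun m => (P i0).2.2.meetIndices (P m).2.2
  have hS : ∀ m, (S m).Nonempty := fun m => (hlong i0).meetIndices_nonempty hG (hlong m)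
  have hcommon : ∀ t, ∃ m, t ∉ S m := by
    intro t
    by_contra! ht
    refine hf.ne' (pdf_eq_zero_of_forall_mem_support P (x := (P i0).2.2.getVert t) fun m => ?_)
    rcases eq_or_ne m i0 with rfl | hm
    · exact (P m).2.2.getVert_mem_support t
    · exact (Walk.mem_meetIndices.1 (ht ⟨m, hm⟩)).2
  obtain ⟨i₁, j₁, a₁, b₁, h₁, hb₁⟩ := exists_isGoodInterval_right_le S hS hcommon
  obtain ⟨i₂, j₂, a₂, b₂, h₂, ha₂⟩ := exists_isGoodInterval_le_left S hS hcommon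
  -- the two intervals lie on either side of the midpoint of `P i0`
  have hsep : b₁ ≤ a₂ := by
    have := (hlong i0).two_mul_le_length_of_first_meet (hlong j₁) h₁.right_mem hb₁
    have := (hlong i0).length_le_two_mul_of_last_meet (hlong i₂) h₂.left_mem ha₂
    omega
  have hdisj := Walk.disjoint_edges_take_drop (hlong i0).1 (a₁ := a₁) (b₂ := b₂) hsep
  refine ⟨_, _, _, _, _, _, isGoodPath_of_isGoodInterval h₁, isGoodPath_of_isGoodInterval h₂,
    Walk.sigma_ne_of_disjoint_edges ?_ hdisj, hdisj⟩
  rw [← Walk.length_eq_zero_iff, Walk.take_length, Walk.drop_length]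
  have := (Walk.mem_meetIndices.1 h₁.right_mem).1
  have := h₁.lt
  omega

/-- Lemma 5: if `f(G,𝒫) > 0`, then every path of `𝒫` carries two distinct
edge-disjoint good paths (equivalently, `t'_𝒫(P) = 1` forces `f(G,𝒫) = 0`). -/
theorem lemma_two_edge_disjoint_good_paths {V : Type*} [Fintype V] (G : SimpleGraph V)
    (hG : G.Connected) (k : ℕ) (hk : 3 ≤ k)
    (P : Fin k → Σ u : V, Σ v : V, G.Walk u v)
    (hinj : Function.Injective P) (hlong : ∀ i, IsLongestPath G (P i).2.2)
    (hf : 0 < pdf G P) (i0 : Fin k) :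
    ∃ (a b : V) (Q₁ : G.Walk a b) (c d : V) (Q₂ : G.Walk c d),
      IsGoodPath G P i0 Q₁ ∧ IsGoodPath G P i0 Q₂ ∧
      (⟨a, ⟨b, Q₁⟩⟩ : Σ u : V, Σ v : V, G.Walk u v) ≠ ⟨c, ⟨d, Q₂⟩⟩ ∧
      ∀ e ∈ Q₁.edges, e ∉ Q₂.edges :=
  lemma_two_edge_disjoint_good_paths_general G hG k P hlong hf i0
end

section
/- Let G be a connected finite graph, let P = {P, P₁, …, P_{k-1}} be a set of exactly k ≥ 3 longest paths of G, and let Q be a good path on P. Then 2·f(G,P) ≤ (k-1)·(|V(Q)| - 1). -/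
open SimpleGraph

/-- Lemma 6(i): for a good path `Q` on a member of `𝒫`,
`2·f(G,𝒫) ≤ (k-1)·(|V(Q)| - 1)`. -/
theorem lemma_good_path_pdf_bound {V : Type*} [Fintype V] (G : SimpleGraph V)
    (hG : G.Connected) (k : ℕ) (hk : 3 ≤ k)
    (P : Fin k → Σ u : V, Σ v : V, G.Walk u v)
    (hinj : Function.Injective P) (hlong : ∀ i, IsLongestPath G (P i).2.2)
    (i0 : Fin k) {a b : V} (Q : G.Walk a b) (hQ : IsGoodPath G P i0 Q) :
    2 * pdf G P ≤ (k - 1) * (Q.support.length - 1) := by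
  classical
  obtain ⟨⟨w₁, w₂, hP0⟩, i, j, hii0, hji0, hij, ha, hb, hmeet, hint⟩ := hQ
  have haQ : a ∈ Q.support := Q.start_mem_support
  have hbQ : b ∈ Q.support := Q.end_mem_support
  have hsub : ∀ x ∈ Q.support, x ∈ (P i0).2.2.support := by
    intro x hx
    rw [hP0]
    simp only [Walk.mem_support_append_iff]
    tauto
  have key : ∀ m, distToWalk G a (P m).2.2 + distToWalk G b (P m).2.2 ≤
      if m = i0 then 0 else Q.length := by
    intro m
    by_cases hm : m = i0
    · rw [if_pos hm]
      have hma : a ∈ (P m).2.2.support := by rw [hm]; exact hsub a haQ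
      have hmb : b ∈ (P m).2.2.support := by rw [hm]; exact hsub b hbQ
      have h1 : distToWalk G a (P m).2.2 ≤ 0 :=
        le_trans (Nat.sInf_le ⟨a, hma, rfl⟩) (by simp)
      have h2 : distToWalk G b (P m).2.2 ≤ 0 :=
        le_trans (Nat.sInf_le ⟨b, hmb, rfl⟩) (by simp)
      omega
    · obtain ⟨x, hxQ, hxm⟩ := hmeet m hm
      have h1 : distToWalk G a (P m).2.2 ≤ (Q.takeUntil x hxQ).length :=
        le_trans (Nat.sInf_le ⟨x, hxm, rfl⟩) (SimpleGraph.dist_le _)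
      have h2 : distToWalk G b (P m).2.2 ≤ (Q.dropUntil x hxQ).length := by
        refine le_trans (Nat.sInf_le ⟨x, hxm, rfl⟩) ?_
        rw [SimpleGraph.dist_comm]
        exact SimpleGraph.dist_le _
      have hlen : (Q.takeUntil x hxQ).length + (Q.dropUntil x hxQ).length = Q.length := by
        conv_rhs => rw [← Q.take_spec hxQ]
        rw [Walk.length_append]
      rw [if_neg hm]
      omega
  have hpdfa : pdf G P ≤ ∑ m, distToWalk G a (P m).2.2 := Nat.sInf_le ⟨a, rfl⟩
  have hpdfb : pdf G P ≤ ∑ m, distToWalk G b (P m).2.2 := Nat.sInf_le ⟨b, rfl⟩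
  have hsum : (∑ m, distToWalk G a (P m).2.2) + (∑ m, distToWalk G b (P m).2.2) ≤
      (k - 1) * Q.length := by
    rw [← Finset.sum_add_distrib]
    calc ∑ m, (distToWalk G a (P m).2.2 + distToWalk G b (P m).2.2)
        ≤ ∑ m : Fin k, (if m = i0 then 0 else Q.length) :=
          Finset.sum_le_sum (fun m _ => key m)
      _ = ∑ m ∈ Finset.univ.erase i0, (if m = i0 then 0 else Q.length) :=
          (Finset.sum_erase _ (by simp)).symm
      _ = ∑ _m ∈ Finset.univ.erase i0, Q.length :=
          Finset.sum_congr rfl (fun m hm => if_neg (Finset.ne_of_mem_erase hm))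
      _ = (k - 1) * Q.length := by
          rw [Finset.sum_const, Finset.card_erase_of_mem (Finset.mem_univ _),
            Finset.card_univ, Fintype.card_fin, smul_eq_mul]
  have hQlen : Q.support.length - 1 = Q.length := by
    rw [Walk.length_support]
    omega
  rw [hQlen]
  omega
end

section
/- Let G be a connected finite graph and let P = {P, P₁, …, P_{k-1}} be a set of exactly k ≥ 3 longest paths of G. Then the number of vertices of P that lie on at most k-2 of the paths of P (i.e., |X¹_P(P) ∪ X²_P(P) ∪ … ∪ X^{k-2}_P(P)|) is at least t'_P(P)·(2·f(G,P)/(k-1) − 1). -/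
open SimpleGraph

section Aux
variable {V : Type*} {G : SimpleGraph V}

lemma myDistGetVertAdd (hG : G.Connected) {u v : V} (w : G.Walk u v) (i d : ℕ) :
    G.dist (w.getVert i) (w.getVert (i + d)) ≤ d := by
  induction d with
  | zero => simp
  | succ d ih =>
    have heq : i + (d + 1) = (i + d) + 1 := rfl
    rw [heq]
    by_cases h : i + d < w.length
    · have hadj := w.adj_getVert_succ h
      have h1 : G.dist (w.getVert (i + d)) (w.getVert (i + d + 1)) = 1 :=
        SimpleGraph.dist_eq_one_iff_adj.mpr hadj
      have := hG.dist_triangle (u := w.getVert i) (v := w.getVert (i + d))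
        (w := w.getVert (i + d + 1))
      omega
    · have h1 : w.getVert (i + d) = v := w.getVert_of_length_le (by omega)
      have h2 : w.getVert (i + d + 1) = v := w.getVert_of_length_le (by omega)
      rw [h2]
      rw [h1] at ih
      omega

lemma myDistGetVert (hG : G.Connected) {u v : V} (w : G.Walk u v) (i j : ℕ) :
    G.dist (w.getVert i) (w.getVert j) ≤ (i - j) + (j - i) := by
  rcases le_total i j with h | h
  · have := myDistGetVertAdd hG w i (j - i)
    rw [Nat.add_sub_cancel' h] at this
    omega
  · have := myDistGetVertAdd hG w j (i - j)
    rw [Nat.add_sub_cancel' h, SimpleGraph.dist_comm] at this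
    omega

lemma myMemSupportOfMemEdges {a b x : V} (p : G.Walk a b) {e : Sym2 V}
    (he : e ∈ p.edges) (hx : x ∈ e) : x ∈ p.support := by
  induction e with
  | _ c d =>
    rcases Sym2.mem_iff.mp hx with rfl | rfl
    · exact p.fst_mem_support_of_mem_edges he
    · exact p.snd_mem_support_of_mem_edges he

lemma myTwoEdges {a b : V} (Q : G.Walk a b) :
    ∀ x, Q.IsPath → x ∈ Q.support → x ≠ a → x ≠ b →
    ∃ e₁ e₂, e₁ ∈ Q.edges ∧ e₂ ∈ Q.edges ∧ e₁ ≠ e₂ ∧ x ∈ e₁ ∧ x ∈ e₂ := by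
  induction Q with
  | nil => intro x _ hx hxa _; simp at hx; exact absurd hx hxa
  | @cons u u' v hadj p ih =>
    intro x hp hx hxa hxb
    rw [Walk.support_cons, List.mem_cons] at hx
    rcases hx with rfl | hx
    · exact absurd rfl hxa
    have hp' : p.IsPath := hp.of_cons
    have hu : u ∉ p.support := (Walk.cons_isPath_iff _ _).mp hp |>.2
    by_cases hxu' : x = u'
    · subst hxu'
      cases p with
      | nil => exact absurd rfl hxb
      | @cons _ u'' _ hadj' p' =>
        refine ⟨s(u, x), s(x, u''), ?_, ?_, ?_, ?_, ?_⟩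
        · simp [Walk.edges_cons]
        · simp [Walk.edges_cons]
        · intro hcon
          rw [Sym2.eq_iff] at hcon
          rcases hcon with ⟨rfl, h2⟩ | ⟨h1, h2⟩
          · exact G.irrefl hadj
          · apply hu; rw [h1, Walk.support_cons]; simp
        · simp
        · simp
    · obtain ⟨e₁, e₂, h1, h2, h3, h4, h5⟩ := ih x hp' hx hxu' hxb
      exact ⟨e₁, e₂, by simp [Walk.edges_cons, h1], by simp [Walk.edges_cons, h2], h3, h4, h5⟩

lemma myAtMostTwoEdges {u v : V} (W : G.Walk u v) :
    ∀ x, W.IsPath →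
    ((x = u → ∀ e₁ e₂, e₁ ∈ W.edges → e₂ ∈ W.edges → x ∈ e₁ → x ∈ e₂ → e₁ = e₂) ∧
     (∀ e₁ e₂ e₃, e₁ ∈ W.edges → e₂ ∈ W.edges → e₃ ∈ W.edges →
       x ∈ e₁ → x ∈ e₂ → x ∈ e₃ → e₁ = e₂ ∨ e₁ = e₃ ∨ e₂ = e₃)) := by
  induction W with
  | nil => intro x _; constructor <;> intro _ <;> simp_all
  | @cons u u' v hadj p ih =>
    intro x hp
    have hp' : p.IsPath := hp.of_cons
    have hu : u ∉ p.support := (Walk.cons_isPath_iff _ _).mp hp |>.2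
    have ih1 := (ih x hp').1
    have ih2 := (ih x hp').2
    have hmem : ∀ e, e ∈ (Walk.cons hadj p).edges → e = s(u, u') ∨ e ∈ p.edges := by
      intro e he; rw [Walk.edges_cons, List.mem_cons] at he; exact he
    have key1 : x = u → ∀ e₁ e₂, e₁ ∈ (Walk.cons hadj p).edges →
        e₂ ∈ (Walk.cons hadj p).edges → x ∈ e₁ → x ∈ e₂ → e₁ = e₂ := by
      rintro rfl e₁ e₂ he₁ he₂ hx₁ hx₂
      have key : ∀ e, e ∈ (Walk.cons hadj p).edges → x ∈ e → e = s(x, u') := by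
        intro e he hxe
        rcases hmem e he with h | h
        · exact h
        · exact absurd (myMemSupportOfMemEdges p h hxe) hu
      rw [key e₁ he₁ hx₁, key e₂ he₂ hx₂]
    refine ⟨key1, ?_⟩
    intro e₁ e₂ e₃ he₁ he₂ he₃ hx₁ hx₂ hx₃
    by_cases hxu : x = u
    · left; exact key1 hxu e₁ e₂ he₁ he₂ hx₁ hx₂
    · have hstep : ∀ e, e ∈ (Walk.cons hadj p).edges → x ∈ e → e = s(u, u') → x = u' := by
        intro e _ hxe heq
        subst heq
        rcases Sym2.mem_iff.mp hxe with h | h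
        · exact absurd h hxu
        · exact h
      rcases hmem e₁ he₁ with h₁ | h₁ <;> rcases hmem e₂ he₂ with h₂ | h₂ <;>
        rcases hmem e₃ he₃ with h₃ | h₃
      · left; rw [h₁, h₂]
      · left; rw [h₁, h₂]
      · right; left; rw [h₁, h₃]
      · have hxu2 : x = u' := hstep e₁ he₁ hx₁ h₁
        subst hxu2
        right; right; exact ih1 rfl e₂ e₃ h₂ h₃ hx₂ hx₃
      · right; right; rw [h₂, h₃]
      · have hxu2 : x = u' := hstep e₂ he₂ hx₂ h₂
        subst hxu2
        right; left; exact ih1 rfl e₁ e₃ h₁ h₃ hx₁ hx₃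
      · have hxu2 : x = u' := hstep e₃ he₃ hx₃ h₃
        subst hxu2
        left; exact ih1 rfl e₁ e₂ h₁ h₂ hx₁ hx₂
      · exact ih2 e₁ e₂ e₃ h₁ h₂ h₃ hx₁ hx₂ hx₃

end Aux

section MainAux
variable {V : Type*} {G : SimpleGraph V}

lemma myInfixSupport {a b u v : V} {Q : G.Walk a b} {W : G.Walk u v}
    (h : IsInfixOf G Q W) : ∀ x ∈ Q.support, x ∈ W.support := by
  obtain ⟨w₁, w₂, rfl⟩ := h
  intro x hx
  rw [Walk.mem_support_append_iff]
  left
  rw [Walk.mem_support_append_iff]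
  right
  exact hx

lemma myInfixEdges {a b u v : V} {Q : G.Walk a b} {W : G.Walk u v}
    (h : IsInfixOf G Q W) : ∀ e ∈ Q.edges, e ∈ W.edges := by
  obtain ⟨w₁, w₂, rfl⟩ := h
  intro e he
  rw [Walk.edges_append, Walk.edges_append]
  simp [he]

lemma myInfixIsPath {a b u v : V} {Q : G.Walk a b} {W : G.Walk u v}
    (h : IsInfixOf G Q W) (hW : W.IsPath) : Q.IsPath := by
  obtain ⟨w₁, w₂, rfl⟩ := h
  exact (Walk.IsPath.of_append_left hW).of_append_right

lemma myNilSigma (q : Σ a : V, Σ b : V, G.Walk a b) (h : q.2.2.edges = []) :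
    q = ⟨q.1, q.1, Walk.nil⟩ := by
  obtain ⟨a, b, w⟩ := q
  cases w with
  | nil => rfl
  | cons h' p => simp [Walk.edges_cons] at h

end MainAux

/-- Lemma 6(ii): `|X¹_𝒫(P) ∪ ... ∪ X^{k-2}_𝒫(P)| ≥ t'_𝒫(P)·(2·f(G,𝒫)/(k-1) - 1)`. -/
theorem lemma_X_card_bound {V : Type*} [Fintype V] [DecidableEq V] (G : SimpleGraph V)
    (hG : G.Connected) (k : ℕ) (hk : 3 ≤ k)
    (P : Fin k → Σ u : V, Σ v : V, G.Walk u v)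
    (hinj : Function.Injective P) (hlong : ∀ i, IsLongestPath G (P i).2.2)
    (i0 : Fin k) :
    (tprime G P i0 : ℝ) * (2 * (pdf G P : ℝ) / ((k : ℝ) - 1) - 1) ≤
      (XUpTo G P i0 (k - 2) : ℝ) := by
  classical
  have hWpath : (P i0).2.2.IsPath := (hlong i0).1
  set S := {n : ℕ | ∃ Qs : Fin n → Σ a : V, Σ b : V, G.Walk a b,
    Function.Injective Qs ∧ (∀ t, IsGoodPath G P i0 (Qs t).2.2) ∧
    Pairwise fun s t => ∀ e ∈ (Qs s).2.2.edges, e ∉ (Qs t).2.2.edges} with hSdef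
  have hne : S.Nonempty := by
    refine ⟨0, fun t => t.elim0, fun s => s.elim0, fun t => t.elim0, ?_⟩
    intro s t _
    exact s.elim0
  have hbdd : BddAbove S := by
    refine ⟨Fintype.card (V ⊕ Sym2 V), ?_⟩
    rintro n ⟨Qs, hQinj, hQgood, hQdisj⟩
    have hinj2 : Function.Injective (fun t : Fin n =>
        if h : (Qs t).2.2.edges = [] then (Sum.inl (Qs t).1 : V ⊕ Sym2 V)
        else Sum.inr ((Qs t).2.2.edges.head h)) := by
      intro s t hst
      by_contra hne'
      dsimp only at hst
      by_cases hs : (Qs s).2.2.edges = [] <;> by_cases ht : (Qs t).2.2.edges = []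
      · rw [dif_pos hs, dif_pos ht] at hst
        have h1 : Qs s = ⟨(Qs s).1, (Qs s).1, Walk.nil⟩ := myNilSigma _ hs
        have h2 : Qs t = ⟨(Qs t).1, (Qs t).1, Walk.nil⟩ := myNilSigma _ ht
        have h3 : (Qs s).1 = (Qs t).1 := Sum.inl.inj hst
        exact hne' (hQinj (by rw [h1, h2, h3]))
      · rw [dif_pos hs, dif_neg ht] at hst
        exact absurd hst (by simp)
      · rw [dif_neg hs, dif_pos ht] at hst
        exact absurd hst (by simp)
      · rw [dif_neg hs, dif_neg ht] at hst
        have h3 := Sum.inr.inj hst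
        have h4 : (Qs s).2.2.edges.head hs ∈ (Qs s).2.2.edges := List.head_mem hs
        have h5 : (Qs t).2.2.edges.head ht ∈ (Qs t).2.2.edges := List.head_mem ht
        exact hQdisj hne' _ h4 (h3 ▸ h5)
    calc n = Fintype.card (Fin n) := (Fintype.card_fin n).symm
      _ ≤ Fintype.card (V ⊕ Sym2 V) := Fintype.card_le_of_injective _ hinj2
  set n := tprime G P i0 with hn
  have hmem : n ∈ S := by
    rw [hn]
    have h : tprime G P i0 = sSup S := rfl
    rw [h]
    exact Nat.sSup_mem hne hbdd
  obtain ⟨Qs, hQinj, hQgood, hQdisj⟩ := hmem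
  set f := pdf G P with hf
  -- basic facts about each good path
  have hpath : ∀ t : Fin n, (Qs t).2.2.IsPath := fun t =>
    myInfixIsPath (hQgood t).1 hWpath
  have hsub : ∀ t : Fin n, ∀ x ∈ (Qs t).2.2.support, x ∈ (P i0).2.2.support :=
    fun t => myInfixSupport (hQgood t).1
  have hedge : ∀ t : Fin n, ∀ e ∈ (Qs t).2.2.edges, e ∈ (P i0).2.2.edges :=
    fun t => myInfixEdges (hQgood t).1
  -- the length bound : 2 f ≤ (k-1) * length
  have hlen : ∀ t : Fin n, 2 * f ≤ (k - 1) * (Qs t).2.2.length := by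
    intro t
    obtain ⟨hinfix, i, j, hii0, hji0, hij, hai, hbj, hmeets, hint⟩ := hQgood t
    set Q := (Qs t).2.2 with hQ
    set L := Q.length with hL
    set x := Q.getVert (L / 2) with hx
    set x' := Q.getVert (L - L / 2) with hx'
    have hxQ : x ∈ Q.support :=
      Walk.mem_support_iff_exists_getVert.mpr ⟨L / 2, rfl, by omega⟩
    have hx'Q : x' ∈ Q.support :=
      Walk.mem_support_iff_exists_getVert.mpr ⟨L - L / 2, rfl, by omega⟩
    have hd1 : f ≤ ∑ m, distToWalk G x (P m).2.2 := Nat.sInf_le ⟨x, rfl⟩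
    have hd2 : f ≤ ∑ m, distToWalk G x' (P m).2.2 := Nat.sInf_le ⟨x', rfl⟩
    have hzx : distToWalk G x (P i0).2.2 = 0 :=
      Nat.le_zero.mp (Nat.sInf_le ⟨x, hsub t x hxQ, SimpleGraph.dist_self⟩)
    have hzx' : distToWalk G x' (P i0).2.2 = 0 :=
      Nat.le_zero.mp (Nat.sInf_le ⟨x', hsub t x' hx'Q, SimpleGraph.dist_self⟩)
    have hkey : ∀ m : Fin k, m ≠ i0 →
        distToWalk G x (P m).2.2 + distToWalk G x' (P m).2.2 ≤ L := by
      intro m hm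
      obtain ⟨y, hyQ, hyP⟩ := hmeets m hm
      obtain ⟨p, hpy, hpL⟩ := Walk.mem_support_iff_exists_getVert.mp hyQ
      have h1 : distToWalk G x (P m).2.2 ≤ G.dist x y := Nat.sInf_le ⟨y, hyP, rfl⟩
      have h2 : distToWalk G x' (P m).2.2 ≤ G.dist x' y := Nat.sInf_le ⟨y, hyP, rfl⟩
      have h3 : G.dist x y ≤ (L / 2 - p) + (p - L / 2) :=
        hpy ▸ myDistGetVert hG Q (L / 2) p
      have h4 : G.dist x' y ≤ ((L - L / 2) - p) + (p - (L - L / 2)) :=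
        hpy ▸ myDistGetVert hG Q (L - L / 2) p
      omega
    have hsplit : ∑ m, (distToWalk G x (P m).2.2 + distToWalk G x' (P m).2.2)
        ≤ (k - 1) * L := by
      rw [← Finset.add_sum_erase _ _ (Finset.mem_univ i0)]
      have hbound : ∑ m ∈ Finset.univ.erase i0,
          (distToWalk G x (P m).2.2 + distToWalk G x' (P m).2.2)
          ≤ (Finset.univ.erase i0).card • L :=
        Finset.sum_le_card_nsmul _ _ _ (fun m hm => hkey m (Finset.ne_of_mem_erase hm))
      have hcard : (Finset.univ.erase i0).card = k - 1 := by
        rw [Finset.card_erase_of_mem (Finset.mem_univ i0), Finset.card_univ,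
          Fintype.card_fin]
      rw [hzx, hzx']
      simpa [hcard, smul_eq_mul] using hbound
    rw [Finset.sum_add_distrib] at hsplit
    omega
  -- internal vertex sets
  set I : Fin n → Finset V := fun t =>
    (Qs t).2.2.support.toFinset \ {(Qs t).1, (Qs t).2.1} with hI
  have hIcard : ∀ t : Fin n, (Qs t).2.2.length ≤ (I t).card + 1 := by
    intro t
    have h1 : (Qs t).2.2.support.toFinset.card = (Qs t).2.2.length + 1 := by
      rw [List.toFinset_card_of_nodup (hpath t).support_nodup, Walk.length_support]
    have h2 := Finset.le_card_sdiff ({(Qs t).1, (Qs t).2.1} : Finset V)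
      (Qs t).2.2.support.toFinset
    have h3 : ({(Qs t).1, (Qs t).2.1} : Finset V).card ≤ 2 :=
      Finset.card_insert_le _ _ |>.trans (by simp)
    have h4 : (I t).card = ((Qs t).2.2.support.toFinset \ {(Qs t).1, (Qs t).2.1}).card := rfl
    omega
  set target := (P i0).2.2.support.toFinset.filter
    (fun x => countOn G P x ∈ Finset.Icc 1 (k - 2)) with htarget
  have hIsub : ∀ t : Fin n, I t ⊆ target := by
    intro t x hx
    rw [hI] at hx
    simp only [Finset.mem_sdiff, List.mem_toFinset, Finset.mem_insert,
      Finset.mem_singleton, not_or] at hx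
    have hxQ := hx.1
    have hxa := hx.2.1
    have hxb := hx.2.2
    obtain ⟨hinfix, i, j, hii0, hji0, hij, hai, hbj, hmeets, hint⟩ := hQgood t
    have hnotij := hint x hxQ hxa hxb
    have hxW : x ∈ (P i0).2.2.support := hsub t x hxQ
    rw [htarget]
    refine Finset.mem_filter.mpr ⟨List.mem_toFinset.mpr hxW, ?_⟩
    rw [Finset.mem_Icc]
    constructor
    · have hi0mem : i0 ∈ Finset.univ.filter (fun m => x ∈ (P m).2.2.support) :=
        Finset.mem_filter.mpr ⟨Finset.mem_univ _, hxW⟩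
      exact Finset.card_pos.mpr ⟨i0, hi0mem⟩
    · have hsub2 : Finset.univ.filter (fun m => x ∈ (P m).2.2.support)
          ⊆ (Finset.univ.erase i).erase j := by
        intro m hm
        rw [Finset.mem_filter] at hm
        refine Finset.mem_erase.mpr ⟨?_, Finset.mem_erase.mpr ⟨?_, Finset.mem_univ m⟩⟩
        · rintro rfl
          exact hnotij.2 hm.2
        · rintro rfl
          exact hnotij.1 hm.2
      have hc : ((Finset.univ.erase i).erase j).card = k - 2 := by
        rw [Finset.card_erase_of_mem
            (Finset.mem_erase.mpr ⟨hij.symm, Finset.mem_univ j⟩),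
          Finset.card_erase_of_mem (Finset.mem_univ i), Finset.card_univ,
          Fintype.card_fin]
        omega
      calc countOn G P x ≤ ((Finset.univ.erase i).erase j).card :=
            Finset.card_le_card hsub2
        _ = k - 2 := hc
  have hIdisj : ∀ s t : Fin n, s ≠ t → Disjoint (I s) (I t) := by
    intro s t hst
    rw [Finset.disjoint_left]
    intro x hxs hxt
    rw [hI] at hxs hxt
    simp only [Finset.mem_sdiff, List.mem_toFinset, Finset.mem_insert,
      Finset.mem_singleton, not_or] at hxs hxt
    obtain ⟨e₁, e₂, he₁, he₂, hee, hxe₁, hxe₂⟩ :=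
      myTwoEdges (Qs s).2.2 x (hpath s) hxs.1 hxs.2.1 hxs.2.2
    obtain ⟨f₁, f₂, hf₁, hf₂, hff, hxf₁, hxf₂⟩ :=
      myTwoEdges (Qs t).2.2 x (hpath t) hxt.1 hxt.2.1 hxt.2.2
    have h3 := (myAtMostTwoEdges (P i0).2.2 x hWpath).2 e₁ e₂ f₁
      (hedge s _ he₁) (hedge s _ he₂) (hedge t _ hf₁) hxe₁ hxe₂ hxf₁
    rcases h3 with h | h | h
    · exact hee h
    · exact hQdisj hst e₁ he₁ (h ▸ hf₁)
    · exact hQdisj hst e₂ he₂ (h ▸ hf₁)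
  have hcards : ∑ t, (I t).card ≤ XUpTo G P i0 (k - 2) := by
    have hbiUnion : (Finset.univ.biUnion I) ⊆ target :=
      Finset.biUnion_subset.mpr (fun t _ => hIsub t)
    have hcardsum : ∑ t, (I t).card = (Finset.univ.biUnion I).card :=
      (Finset.card_biUnion (fun s _ t _ hst => hIdisj s t hst)).symm
    have hXU : XUpTo G P i0 (k - 2) = target.card := rfl
    rw [hXU, hcardsum]
    exact Finset.card_le_card hbiUnion
  -- real arithmetic
  have hk1 : (0 : ℝ) < (k : ℝ) - 1 := by
    have h3 : (3 : ℝ) ≤ (k : ℝ) := by exact_mod_cast hk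
    linarith
  have hper : ∀ t : Fin n, 2 * (f : ℝ) / ((k : ℝ) - 1) - 1 ≤ ((I t).card : ℝ) := by
    intro t
    have h1 : 2 * (f : ℝ) ≤ ((k : ℝ) - 1) * ((Qs t).2.2.length : ℝ) := by
      have hc := hlen t
      have hcast : ((k - 1 : ℕ) : ℝ) = (k : ℝ) - 1 := by
        rw [Nat.cast_sub (by omega)]
        simp
      calc 2 * (f : ℝ) = ((2 * f : ℕ) : ℝ) := by push_cast; ring
        _ ≤ (((k - 1) * (Qs t).2.2.length : ℕ) : ℝ) := by exact_mod_cast hc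
        _ = ((k : ℝ) - 1) * ((Qs t).2.2.length : ℝ) := by rw [Nat.cast_mul, hcast]
    have h2 : ((Qs t).2.2.length : ℝ) ≤ ((I t).card : ℝ) + 1 := by
      exact_mod_cast hIcard t
    have h3 : 2 * (f : ℝ) / ((k : ℝ) - 1) ≤ ((Qs t).2.2.length : ℝ) :=
      (div_le_iff₀ hk1).mpr (by linarith)
    linarith
  calc (n : ℝ) * (2 * (f : ℝ) / ((k : ℝ) - 1) - 1)
      = ∑ _t : Fin n, (2 * (f : ℝ) / ((k : ℝ) - 1) - 1) := by
        rw [Finset.sum_const, Finset.card_univ, Fintype.card_fin, nsmul_eq_mul]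
    _ ≤ ∑ t : Fin n, ((I t).card : ℝ) := Finset.sum_le_sum (fun t _ => hper t)
    _ = ((∑ t, (I t).card : ℕ) : ℝ) := by push_cast; rfl
    _ ≤ (XUpTo G P i0 (k - 2) : ℝ) := by exact_mod_cast hcards
end

section
/- Let G be a connected finite graph, let P = {P, P₁, P₂, P₃} be a set of exactly 4 longest paths of G, and let Q be a good path on P. Then f(G,P) ≤ |V(Q)| − 1. -/
open SimpleGraph

/-- Corollary 7(i): for four longest paths and a good path `Q` on a member of `𝒫`,
`f(G,𝒫) ≤ |V(Q)| - 1`. -/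
theorem cor_good_path_pdf_bound_four {V : Type*} [Fintype V] (G : SimpleGraph V)
    (hG : G.Connected) (P : Fin 4 → Σ u : V, Σ v : V, G.Walk u v)
    (hinj : Function.Injective P) (hlong : ∀ i, IsLongestPath G (P i).2.2)
    (i0 : Fin 4) {a b : V} (Q : G.Walk a b) (hQ : IsGoodPath G P i0 Q) :
    pdf G P ≤ Q.support.length - 1 := by
  classical
  obtain ⟨hinfix, i, j, hi0, hj0, hij, ha, hb, hmeet, -⟩ := hQ
  -- the fourth index
  have key : ∀ i0 i j : Fin 4, i ≠ i0 → j ≠ i0 → i ≠ j →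
      ∃ m : Fin 4, m ≠ i0 ∧ m ≠ i ∧ m ≠ j := by decide
  have hm := key i0 i j hi0 hj0 hij
  obtain ⟨m, hmi0, hmi, hmj⟩ := hm
  obtain ⟨x, hxQ, hxm⟩ := hmeet m hmi0
  -- x lies on P i0
  have hxi0 : x ∈ (P i0).2.2.support := by
    obtain ⟨w₁, w₂, hw⟩ := hinfix
    rw [hw]
    rw [SimpleGraph.Walk.mem_support_append_iff, SimpleGraph.Walk.mem_support_append_iff]
    exact Or.inl (Or.inr hxQ)
  -- basic distToWalk facts
  have dle : ∀ (z : V) {u v : V} (w : G.Walk u v), ∀ y ∈ w.support,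
      distToWalk G z w ≤ G.dist z y := fun z u v w y hy => Nat.sInf_le ⟨y, hy, rfl⟩
  have dzero : ∀ (z : V) {u v : V} (w : G.Walk u v), z ∈ w.support →
      distToWalk G z w = 0 := by
    intro z u v w hz
    have := dle z w z hz
    simpa [SimpleGraph.dist_self] using this
  -- split Q at x
  set Q1 := Q.takeUntil x hxQ with hQ1
  set Q2 := Q.dropUntil x hxQ with hQ2
  have hsplit : Q1.length + Q2.length = Q.length := by
    have := Q.take_spec hxQ
    calc Q1.length + Q2.length = (Q1.append Q2).length := (SimpleGraph.Walk.length_append _ _).symm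
      _ = Q.length := by rw [this]
  have hxa : G.dist x a ≤ Q1.length := by
    rw [SimpleGraph.dist_comm]
    exact SimpleGraph.dist_le Q1
  have hxb : G.dist x b ≤ Q2.length := SimpleGraph.dist_le Q2
  -- bound each summand
  have hbound : ∀ t : Fin 4, distToWalk G x (P t).2.2 ≤
      (if t = i then Q1.length else 0) + (if t = j then Q2.length else 0) := by
    intro t
    by_cases hti : t = i
    · subst hti
      simp only [if_pos rfl, if_neg hij]
      exact le_trans (dle x (P t).2.2 a ha) (by simpa using hxa)
    · by_cases htj : t = j
      · subst htj
        simp only [if_neg hti, if_pos rfl]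
        exact le_trans (dle x (P t).2.2 b hb) (by simpa using hxb)
      · have key2 : ∀ i0 i j m t : Fin 4, i ≠ i0 → j ≠ i0 → i ≠ j → m ≠ i0 → m ≠ i → m ≠ j →
            t ≠ i → t ≠ j → t = i0 ∨ t = m := by decide
        have ht : t = i0 ∨ t = m := key2 i0 i j m t hi0 hj0 hij hmi0 hmi hmj hti htj
        rw [if_neg hti, if_neg htj]
        rcases ht with h | h
        · subst h; simp [dzero x (P t).2.2 hxi0]
        · subst h; simp [dzero x (P t).2.2 hxm]
  have hsum : ∑ t, distToWalk G x (P t).2.2 ≤ Q.length := by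
    calc ∑ t, distToWalk G x (P t).2.2
        ≤ ∑ t : Fin 4, ((if t = i then Q1.length else 0) + (if t = j then Q2.length else 0)) :=
          Finset.sum_le_sum fun t _ => hbound t
      _ = Q1.length + Q2.length := by
          rw [Finset.sum_add_distrib]
          simp [Finset.sum_ite_eq']
      _ = Q.length := hsplit
  have hpdf : pdf G P ≤ ∑ t, distToWalk G x (P t).2.2 := Nat.sInf_le ⟨x, rfl⟩
  have : Q.support.length - 1 = Q.length := by
    rw [SimpleGraph.Walk.length_support]
    omega
  rw [this]
  exact le_trans hpdf hsum
end

section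
/- Let G be a connected finite graph and let P = {P, P₁, P₂, P₃} be a set of exactly 4 longest paths of G. Then the number of vertices of P that lie on at most 2 of the paths of P (i.e., |X¹_P(P) ∪ X²_P(P)|) is at least t'_P(P)·(f(G,P) − 1). -/
/-!
The internal vertices of a good path `Q` on `P i0` lie on `P i0` but not on the two members
carrying its end-vertices, so they lie on one or two members. The fourth member meets `Q`, and
summing distances from that meeting vertex shows `f(G, 𝒫) ≤ |Q|`, so `Q` has at least
`f(G, 𝒫) - 1` internal vertices. Finally, edge-disjoint subpaths of the path `P i0` have
disjoint sets of internal vertices, so a family of `t'` of them contributes `t'·(f(G, 𝒫) - 1)`.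
-/

open SimpleGraph

open Finset

namespace SimpleGraph.Walk

variable {V : Type*} {G : SimpleGraph V}

def innerSupport [DecidableEq V] {u v : V} (p : G.Walk u v) : Finset V :=
  p.support.tail.toFinset.erase v

lemma dist_add_dist_le_length {u v x : V} (p : G.Walk u v) (hx : x ∈ p.support) :
    G.dist u x + G.dist x v ≤ p.length := by
  classical
  rw [← p.take_spec hx, length_append]
  exact add_le_add (dist_le _) (dist_le _)

lemma IsPath.eq_of_mem_darts_of_snd_eq {u v : V} {p : G.Walk u v} (hp : p.IsPath)
    {d d' : G.Dart} (hd : d ∈ p.darts) (hd' : d' ∈ p.darts) (h : d.snd = d'.snd) : d = d' :=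
  List.inj_on_of_nodup_map (p.map_snd_darts ▸ hp.support_nodup.sublist (List.tail_sublist _))
    hd hd' h

/-- A vertex after the start of a subwalk is entered by a dart of the subwalk, and in a path each
vertex is entered by at most one dart. -/
lemma IsPath.disjoint_support_tail {u v a b a' b' : V} {W : G.Walk u v} (hW : W.IsPath)
    {Q : G.Walk a b} {Q' : G.Walk a' b'} (hQ : Q.IsSubwalk W) (hQ' : Q'.IsSubwalk W)
    (hdisj : ∀ e ∈ Q.edges, e ∉ Q'.edges) : Q.support.tail.Disjoint Q'.support.tail := by
  intro x hx hx'
  rw [← map_snd_darts, List.mem_map] at hx hx'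
  obtain ⟨d, hd, rfl⟩ := hx
  obtain ⟨d', hd', hdd'⟩ := hx'
  have : d' = d := hW.eq_of_mem_darts_of_snd_eq (hQ'.darts_subset hd') (hQ.darts_subset hd) hdd'
  exact hdisj d.edge (List.mem_map_of_mem hd) (this ▸ List.mem_map_of_mem hd')

variable [DecidableEq V]

lemma mem_of_mem_innerSupport {u v x : V} {p : G.Walk u v} (hp : p.IsPath)
    (hx : x ∈ p.innerSupport) : x ∈ p.support ∧ x ≠ u ∧ x ≠ v := by
  obtain ⟨hxv, hx⟩ := Finset.mem_erase.mp hx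
  rw [List.mem_toFinset] at hx
  have hu : u ∉ p.support.tail := by
    have := hp.support_nodup
    rw [← cons_tail_support, List.nodup_cons] at this
    exact this.1
  exact ⟨List.mem_of_mem_tail hx, fun h => hu (h ▸ hx), hxv⟩

lemma IsPath.length_sub_one_le_card_innerSupport {u v : V} {p : G.Walk u v} (hp : p.IsPath) :
    p.length - 1 ≤ #p.innerSupport := by
  have hcard : #p.support.tail.toFinset = p.length := by
    rw [List.toFinset_card_of_nodup (hp.support_nodup.sublist (List.tail_sublist _)),
      List.length_tail, length_support, Nat.add_sub_cancel]
  exact hcard ▸ pred_card_le_card_erase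

end SimpleGraph.Walk

section GoodPaths

variable {V : Type*} {G : SimpleGraph V}

lemma IsInfixOf.isSubwalk {a b u v : V} {Q : G.Walk a b} {W : G.Walk u v}
    (h : IsInfixOf G Q W) : Q.IsSubwalk W :=
  h

lemma distToWalk_le_dist {x y u v : V} (w : G.Walk u v) (hy : y ∈ w.support) :
    distToWalk G x w ≤ G.dist x y :=
  Nat.sInf_le ⟨y, hy, rfl⟩

lemma distToWalk_eq_zero {x u v : V} (w : G.Walk u v) (hx : x ∈ w.support) :
    distToWalk G x w = 0 :=
  Nat.le_zero.mp (by simpa using distToWalk_le_dist (x := x) w hx)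

lemma pdf_le_dist_add_dist {k : ℕ} (P : Fin k → Σ u : V, Σ v : V, G.Walk u v) {i j : Fin k}
    (hij : i ≠ j) {x a b : V} (ha : a ∈ (P i).2.2.support) (hb : b ∈ (P j).2.2.support)
    (hx : ∀ m, m ≠ i → m ≠ j → x ∈ (P m).2.2.support) :
    pdf G P ≤ G.dist x a + G.dist x b := calc
  pdf G P ≤ ∑ m, distToWalk G x (P m).2.2 := Nat.sInf_le ⟨x, rfl⟩
  _ = distToWalk G x (P i).2.2 + distToWalk G x (P j).2.2 :=
    Fintype.sum_eq_add i j hij fun m hm => distToWalk_eq_zero _ (hx m hm.1 hm.2)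
  _ ≤ G.dist x a + G.dist x b := add_le_add (distToWalk_le_dist _ ha) (distToWalk_le_dist _ hb)

lemma Fin.four_exists_ne_forall_eq_or_eq : ∀ i0 i j : Fin 4, i ≠ i0 → j ≠ i0 → i ≠ j →
    ∃ m, m ≠ i0 ∧ ∀ m', m' ≠ i → m' ≠ j → m' = i0 ∨ m' = m := by
  decide

lemma IsGoodPath.pdf_le_length (P : Fin 4 → Σ u : V, Σ v : V, G.Walk u v) {i0 : Fin 4}
    {a b : V} {Q : G.Walk a b} (hQ : IsGoodPath G P i0 Q) : pdf G P ≤ Q.length := by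
  obtain ⟨hsub, i, j, hi, hj, hij, ha, hb, hmeet, -⟩ := hQ
  obtain ⟨m, hm, hcover⟩ := Fin.four_exists_ne_forall_eq_or_eq i0 i j hi hj hij
  obtain ⟨x, hxQ, hxm⟩ := hmeet m hm
  have hx : ∀ m', m' ≠ i → m' ≠ j → x ∈ (P m').2.2.support := fun m' hm'i hm'j =>
    (hcover m' hm'i hm'j).elim (· ▸ hsub.isSubwalk.support_subset hxQ) (· ▸ hxm)
  calc pdf G P ≤ G.dist x a + G.dist x b := pdf_le_dist_add_dist P hij ha hb hx
    _ = G.dist a x + G.dist x b := by rw [SimpleGraph.dist_comm]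
    _ ≤ Q.length := Q.dist_add_dist_le_length hxQ

variable [DecidableEq V]

lemma IsGoodPath.innerSupport_subset {k : ℕ} {P : Fin k → Σ u : V, Σ v : V, G.Walk u v}
    {i0 : Fin k} (hpath : (P i0).2.2.IsPath) {a b : V} {Q : G.Walk a b}
    (hQ : IsGoodPath G P i0 Q) :
    Q.innerSupport ⊆ (P i0).2.2.support.toFinset.filter
      fun x => countOn G P x ∈ Icc 1 (k - 2) := by
  obtain ⟨hsub, i, j, -, -, hij, -, -, -, hinner⟩ := hQ
  intro x hx
  obtain ⟨hxQ, hxa, hxb⟩ :=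
    Walk.mem_of_mem_innerSupport (Walk.isPath_of_isSubwalk hsub.isSubwalk hpath) hx
  have hxW : x ∈ (P i0).2.2.support := hsub.isSubwalk.support_subset hxQ
  obtain ⟨hxi, hxj⟩ := hinner x hxQ hxa hxb
  have hcount : univ.filter (fun m => x ∈ (P m).2.2.support) ⊆ univ \ {i, j} := by
    intro m hm
    simp only [mem_filter, mem_univ, true_and] at hm
    simp only [mem_sdiff, mem_univ, mem_insert, mem_singleton, true_and, not_or]
    exact ⟨fun h => hxi (h ▸ hm), fun h => hxj (h ▸ hm)⟩
  refine mem_filter.mpr ⟨List.mem_toFinset.mpr hxW, mem_Icc.mpr ⟨?_, ?_⟩⟩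
  · exact card_pos.mpr ⟨i0, mem_filter.mpr ⟨mem_univ _, hxW⟩⟩
  · calc countOn G P x ≤ #(univ \ {i, j}) := card_le_card hcount
      _ = k - 2 := by rw [card_univ_sdiff, card_pair hij, Fintype.card_fin]

lemma card_mul_pdf_sub_one_le_XUpTo (P : Fin 4 → Σ u : V, Σ v : V, G.Walk u v) {i0 : Fin 4}
    (hpath : (P i0).2.2.IsPath) {n : ℕ} (Qs : Fin n → Σ a : V, Σ b : V, G.Walk a b)
    (hgood : ∀ t, IsGoodPath G P i0 (Qs t).2.2)
    (hdisj : Pairwise fun s t => ∀ e ∈ (Qs s).2.2.edges, e ∉ (Qs t).2.2.edges) :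
    n * (pdf G P - 1) ≤ XUpTo G P i0 2 := by
  have hpairwise : ((univ : Finset (Fin n)) : Set (Fin n)).PairwiseDisjoint
      fun s => (Qs s).2.2.innerSupport := by
    intro s _ t _ hst
    have htails := hpath.disjoint_support_tail (hgood s).1.isSubwalk (hgood t).1.isSubwalk
      (hdisj hst)
    exact (List.disjoint_toFinset_iff_disjoint.mpr htails).mono (erase_subset _ _)
      (erase_subset _ _)
  calc n * (pdf G P - 1) = ∑ _s : Fin n, (pdf G P - 1) := by simp
    _ ≤ ∑ s, #(Qs s).2.2.innerSupport := sum_le_sum fun s _ =>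
      (Nat.sub_le_sub_right ((hgood s).pdf_le_length P) 1).trans
        (Walk.isPath_of_isSubwalk (hgood s).1.isSubwalk hpath).length_sub_one_le_card_innerSupport
    _ = #(univ.biUnion fun s => (Qs s).2.2.innerSupport) := (card_biUnion hpairwise).symm
    _ ≤ XUpTo G P i0 2 :=
      card_le_card (biUnion_subset.mpr fun s _ => (hgood s).innerSupport_subset hpath)

end GoodPaths

lemma Nat.sSup_mul_le {S : Set ℕ} {c B : ℕ} (hc : 0 < c) (h : ∀ n ∈ S, n * c ≤ B) :
    sSup S * c ≤ B := by
  rcases S.eq_empty_or_nonempty with rfl | hne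
  · simp
  · exact h _ (Nat.sSup_mem hne ⟨B, fun n hn => (Nat.le_mul_of_pos_right n hc).trans (h n hn)⟩)

theorem cor_X_card_bound_four_general {V : Type*} [DecidableEq V] (G : SimpleGraph V)
    (P : Fin 4 → Σ u : V, Σ v : V, G.Walk u v)
    (hlong : ∀ i, IsLongestPath G (P i).2.2)
    (i0 : Fin 4) :
    (tprime G P i0 : ℝ) * ((pdf G P : ℝ) - 1) ≤ (XUpTo G P i0 2 : ℝ) := by
  rcases Nat.lt_or_ge (pdf G P) 2 with hf | hf
  · have hf' : (pdf G P : ℝ) - 1 ≤ 0 := by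
      rw [sub_nonpos]
      exact_mod_cast Nat.lt_succ_iff.mp hf
    exact (mul_nonpos_of_nonneg_of_nonpos (Nat.cast_nonneg _) hf').trans (Nat.cast_nonneg _)
  · have key : tprime G P i0 * (pdf G P - 1) ≤ XUpTo G P i0 2 :=
      Nat.sSup_mul_le (by omega) fun n ⟨Qs, _, hgood, hdisj⟩ =>
        card_mul_pdf_sub_one_le_XUpTo P (hlong i0).1 Qs hgood hdisj
    rw [← Nat.cast_one, ← Nat.cast_sub (by omega), ← Nat.cast_mul]
    exact_mod_cast key

/-- Corollary 7(ii): for four longest paths,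
`|X¹_𝒫(P) ∪ X²_𝒫(P)| ≥ t'_𝒫(P)·(f(G,𝒫) - 1)`. -/
theorem cor_X_card_bound_four {V : Type*} [Fintype V] [DecidableEq V] (G : SimpleGraph V)
    (hG : G.Connected) (P : Fin 4 → Σ u : V, Σ v : V, G.Walk u v)
    (hinj : Function.Injective P) (hlong : ∀ i, IsLongestPath G (P i).2.2)
    (i0 : Fin 4) :
    (tprime G P i0 : ℝ) * ((pdf G P : ℝ) - 1) ≤ (XUpTo G P i0 2 : ℝ) :=
  cor_X_card_bound_four_general G P hlong i0
end

section
/- Let G be a connected finite graph and let P be a set of exactly k ≥ 3 longest paths of G. Then every path P ∈ P carries at least one good path, i.e., t'_P(P) ≥ 1. -/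
/-!
Two longest paths of a connected graph meet: otherwise a shortest path `R` between them, extended
at both ends by the longer halves of the two paths, would be a longer path. So the other members
of the family all meet `P`, and we may take a shortest subpath `Q` of `P` meeting all of them. If
`Q` is a single vertex, any two other members witness that it is good. Otherwise removing the
first vertex of `Q` loses some member `Pᵢ` and removing the last one loses some `Pⱼ`; then the
end-vertices of `Q` are its only vertices on `Pᵢ` and on `Pⱼ` respectively, which forces `i ≠ j`.
Good paths on `P` are subpaths of `P`, hence finitely many, so the supremum defining `t'(P)` is a
genuine maximum and the good path `Q` gives `t'(P) ≥ 1`.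
-/

open SimpleGraph

namespace SimpleGraph

variable {V : Type*} {G : SimpleGraph V}

namespace Walk

lemma length_takeUntil_add_length_dropUntil [DecidableEq V] {u v x : V} (p : G.Walk u v)
    (hx : x ∈ p.support) : (p.takeUntil x hx).length + (p.dropUntil x hx).length = p.length := by
  rw [← length_append, take_spec]

lemma IsPath.append_of_support_inter {u v w : V} {p : G.Walk u v} {q : G.Walk v w}
    (hp : p.IsPath) (hq : q.IsPath) (h : ∀ z ∈ p.support, z ∈ q.support → z = v) :
    (p.append q).IsPath := by
  rw [isPath_def, support_append, List.nodup_append']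
  have hv : v ∉ q.support.tail :=
    (List.nodup_cons.mp (q.cons_tail_support ▸ hq.support_nodup)).1
  refine ⟨hp.support_nodup, hq.support_nodup.sublist (List.tail_sublist _), ?_⟩
  intro z hzp hzq
  exact hv (h z hzp (List.mem_of_mem_tail hzq) ▸ hzq)

lemma IsPath.exists_half_ending_at {x u v : V} {W : G.Walk u v} (hW : W.IsPath)
    (hx : x ∈ W.support) :
    ∃ (s : V) (C : G.Walk s x), C.IsPath ∧ C.support ⊆ W.support ∧ W.length ≤ 2 * C.length := by
  classical
  have hlen := W.length_takeUntil_add_length_dropUntil hx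
  by_cases hc : (W.dropUntil x hx).length ≤ (W.takeUntil x hx).length
  · exact ⟨u, W.takeUntil x hx, hW.takeUntil hx, W.support_takeUntil_subset_support hx,
      by omega⟩
  · refine ⟨v, (W.dropUntil x hx).reverse, (hW.dropUntil hx).reverse, ?_, by simp; omega⟩
    simpa using W.support_dropUntil_subset_support hx

lemma sigma_ext_of_support_eq {p q : Σ u v : V, G.Walk u v}
    (h : p.2.2.support = q.2.2.support) : p = q := by
  obtain ⟨a, b, p⟩ := p
  obtain ⟨c, d, q⟩ := q
  dsimp only at h
  have hac : a = c := by
    have := congrArg List.head? h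
    rwa [← p.cons_tail_support, ← q.cons_tail_support, List.head?_cons, List.head?_cons,
      Option.some_inj] at this
  have hbd : b = d := by
    have := congrArg List.getLast? h
    rwa [List.getLast?_eq_some_getLast p.support_ne_nil,
      List.getLast?_eq_some_getLast q.support_ne_nil, p.getLast_support, q.getLast_support,
      Option.some_inj] at this
  subst hac hbd
  rw [ext_support h]

lemma card_le_of_injective_subwalks {u v : V} {W : G.Walk u v} {n : ℕ}
    (Qs : Fin n → Σ a b : V, G.Walk a b) (hinj : Function.Injective Qs)
    (hsub : ∀ t, (Qs t).2.2.IsSubwalk W) : n ≤ 2 ^ W.support.length := by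
  classical
  calc n = (Finset.univ : Finset (Fin n)).card := (Finset.card_fin n).symm
    _ ≤ W.support.sublists.toFinset.card := by
      refine Finset.card_le_card_of_injOn (fun t => (Qs t).2.2.support) (fun t _ => ?_)
        fun s _ t _ hst => hinj (sigma_ext_of_support_eq hst)
      simpa using (isSubwalk_iff_support_isInfix.mp (hsub t)).sublist
    _ ≤ W.support.sublists.length := List.toFinset_card_le _
    _ = 2 ^ W.support.length := List.length_sublists _

section MinimalSubwalk

variable {ι : Type*} (S : ι → Set V) (I : Set ι)

lemma exists_minimal_subwalk_meeting {u v : V} {W : G.Walk u v}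
    (hW : ∀ i ∈ I, ∃ x ∈ W.support, x ∈ S i) :
    ∃ (a b : V) (Q : G.Walk a b), Q.IsSubwalk W ∧ (∀ i ∈ I, ∃ x ∈ Q.support, x ∈ S i) ∧
      ∀ (c d : V) (Q' : G.Walk c d), Q'.IsSubwalk Q →
        (∀ i ∈ I, ∃ x ∈ Q'.support, x ∈ S i) → Q.length ≤ Q'.length := by
  classical
  have hex : ∃ n, ∃ (a b : V) (Q : G.Walk a b), Q.IsSubwalk W ∧
      (∀ i ∈ I, ∃ x ∈ Q.support, x ∈ S i) ∧ Q.length = n :=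
    ⟨_, u, v, W, isSubwalk_rfl W, hW, rfl⟩
  obtain ⟨a, b, Q, hQW, hQ, hlen⟩ := Nat.find_spec hex
  exact ⟨a, b, Q, hQW, hQ, fun c d Q' hQ'Q hQ' =>
    hlen ▸ Nat.find_min' hex ⟨c, d, Q', hQ'Q.trans hQW, hQ', rfl⟩⟩

variable {S I}

lemma exists_ends_of_minimal_meeting (hI : I.Nontrivial) {a b : V} {Q : G.Walk a b}
    (hQ : ∀ i ∈ I, ∃ x ∈ Q.support, x ∈ S i)
    (hmin : ∀ (c d : V) (Q' : G.Walk c d), Q'.IsSubwalk Q →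
      (∀ i ∈ I, ∃ x ∈ Q'.support, x ∈ S i) → Q.length ≤ Q'.length) :
    ∃ i j, i ∈ I ∧ j ∈ I ∧ i ≠ j ∧ a ∈ S i ∧ b ∈ S j ∧
      ∀ x ∈ Q.support, x ≠ a → x ≠ b → x ∉ S i ∧ x ∉ S j := by
  by_cases hQn : Q.Nil
  · obtain ⟨i, hi, j, hj, hij⟩ := hI
    have hsupp : Q.support = [a] := nil_iff_support_eq.mp hQn
    have mem_of_meets : ∀ l ∈ I, a ∈ S l := fun l hl => by
      obtain ⟨x, hx, hxS⟩ := hQ l hl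
      rw [hsupp, List.mem_singleton] at hx
      exact hx ▸ hxS
    refine ⟨i, j, hi, hj, hij, mem_of_meets i hi, hQn.eq ▸ mem_of_meets j hj, ?_⟩
    intro x hx hxa
    exact absurd (List.mem_singleton.mp (hsupp ▸ hx)) hxa
  have hpos := not_nil_iff_lt_length.mp hQn
  have misses : ∀ (c d : V) (Q' : G.Walk c d), Q'.IsSubwalk Q → Q'.length < Q.length →
      ∃ i ∈ I, ∀ x ∈ Q'.support, x ∉ S i := by
    intro c d Q' hQ'Q hlt
    by_contra! hmeet
    exact absurd (hmin c d Q' hQ'Q hmeet) (by omega)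
  obtain ⟨i, hi, hiT⟩ := misses _ _ Q.tail (isSubwalk_rfl Q).tail (by rw [length_tail]; omega)
  obtain ⟨j, hj, hjD⟩ :=
    misses _ _ Q.dropLast (isSubwalk_rfl Q).dropLast (by rw [length_dropLast]; omega)
  have hsupT : Q.support = a :: Q.tail.support := (cons_support_tail hQn).symm
  have hsupD : Q.support = Q.dropLast.support ++ [b] := (support_dropLast_concat hQn).symm
  have ha : a ∈ S i := by
    obtain ⟨x, hx, hxS⟩ := hQ i hi
    rw [hsupT, List.mem_cons] at hx
    exact hx.elim (· ▸ hxS) fun hx => absurd hxS (hiT x hx)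
  have hb : b ∈ S j := by
    obtain ⟨x, hx, hxS⟩ := hQ j hj
    rw [hsupD, List.mem_append, List.mem_singleton] at hx
    exact hx.elim (fun hx => absurd hxS (hjD x hx)) (· ▸ hxS)
  refine ⟨i, j, hi, hj, fun hij => hjD a Q.dropLast.start_mem_support (hij ▸ ha), ha, hb, ?_⟩
  intro x hx hxa hxb
  refine ⟨hiT x ?_, hjD x ?_⟩
  · simpa [hsupT, hxa] using hx
  · simpa [hsupD, hxb] using hx

end MinimalSubwalk

end Walk

lemma Connected.exists_isPath_meeting_only_at_ends (hG : G.Connected) {S T : Set V}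
    (hS : S.Nonempty) (hT : T.Nonempty) :
    ∃ (x y : V) (R : G.Walk x y), x ∈ S ∧ y ∈ T ∧ R.IsPath ∧
      ∀ z ∈ R.support, (z ∈ S → z = x) ∧ (z ∈ T → z = y) := by
  classical
  have hex : ∃ n, ∃ (x y : V) (R : G.Walk x y), x ∈ S ∧ y ∈ T ∧ R.IsPath ∧ R.length = n := by
    obtain ⟨x, hx⟩ := hS
    obtain ⟨y, hy⟩ := hT
    obtain ⟨W⟩ := hG.preconnected x y
    exact ⟨_, x, y, W.bypass, hx, hy, W.bypass_isPath, rfl⟩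
  obtain ⟨x, y, R, hx, hy, hR, hlen⟩ := Nat.find_spec hex
  refine ⟨x, y, R, hx, hy, hR, fun z hz => ⟨fun hzS => ?_, fun hzT => ?_⟩⟩
  · have := Nat.find_min' hex ⟨z, y, R.dropUntil z hz, hzS, hy, hR.dropUntil hz, rfl⟩
    have := R.length_takeUntil_add_length_dropUntil hz
    exact (Walk.eq_of_length_eq_zero (by omega : (R.takeUntil z hz).length = 0)).symm
  · have := Nat.find_min' hex ⟨x, z, R.takeUntil z hz, hx, hzT, hR.takeUntil hz, rfl⟩
    have := R.length_takeUntil_add_length_dropUntil hz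
    exact Walk.eq_of_length_eq_zero (by omega : (R.dropUntil z hz).length = 0)

end SimpleGraph

section

open Walk

variable {V : Type*} {G : SimpleGraph V}

lemma IsLongestPath.exists_common_vertex (hG : G.Connected) {u₁ v₁ u₂ v₂ : V}
    {W₁ : G.Walk u₁ v₁} {W₂ : G.Walk u₂ v₂}
    (h₁ : IsLongestPath G W₁) (h₂ : IsLongestPath G W₂) :
    ∃ x ∈ W₁.support, x ∈ W₂.support := by
  by_contra! hdisj
  obtain ⟨x, y, R, hx, hy, hR, hends⟩ := hG.exists_isPath_meeting_only_at_ends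
    (S := {z | z ∈ W₁.support}) (T := {z | z ∈ W₂.support})
    ⟨u₁, W₁.start_mem_support⟩ ⟨u₂, W₂.start_mem_support⟩
  obtain ⟨s₁, C₁, hC₁, hC₁W, hC₁len⟩ := h₁.1.exists_half_ending_at hx
  obtain ⟨s₂, C₂, hC₂, hC₂W, hC₂len⟩ := h₂.1.exists_half_ending_at hy
  have hRpos : 1 ≤ R.length := Nat.one_le_iff_ne_zero.mpr fun h =>
    hdisj x hx (eq_of_length_eq_zero h ▸ hy)
  have hRC₂ : (R.append C₂.reverse).IsPath := hR.append_of_support_inter hC₂.reverse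
    fun z hzR hz => (hends z hzR).2 (hC₂W (by simpa using hz))
  have hlong : (C₁.append (R.append C₂.reverse)).IsPath := by
    refine hC₁.append_of_support_inter hRC₂ fun z hz₁ hz => ?_
    rcases (mem_support_append_iff _ _).mp hz with hzR | hzC₂
    · exact (hends z hzR).1 (hC₁W hz₁)
    · exact absurd (hC₂W (by simpa using hzC₂)) (hdisj z (hC₁W hz₁))
  have hle := h₁.2 _ _ _ hlong
  have hge := h₂.2 _ _ W₁ h₁.1
  simp only [length_append, length_reverse] at hle
  omega

lemma isInfixOf_iff_isSubwalk {a b u v : V} {Q : G.Walk a b} {W : G.Walk u v} :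
    IsInfixOf G Q W ↔ Q.IsSubwalk W :=
  Iff.rfl

lemma one_le_tprime {k : ℕ} {P : Fin k → Σ u v : V, G.Walk u v} {i0 : Fin k} {a b : V}
    {Q : G.Walk a b} (hQ : IsGoodPath G P i0 Q) : 1 ≤ tprime G P i0 := by
  refine le_csSup ⟨2 ^ (P i0).2.2.support.length, ?_⟩
    ⟨fun _ => ⟨a, b, Q⟩, Function.injective_of_subsingleton _, fun _ => hQ,
      fun s t hst => absurd (Subsingleton.elim s t) hst⟩
  rintro n ⟨Qs, hinj, hgood, -⟩
  exact card_le_of_injective_subwalks Qs hinj fun t => isInfixOf_iff_isSubwalk.mp (hgood t).1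

lemma exists_isGoodPath (hG : G.Connected) {k : ℕ} (hk : 3 ≤ k)
    {P : Fin k → Σ u v : V, G.Walk u v} (hlong : ∀ i, IsLongestPath G (P i).2.2) (i0 : Fin k) :
    ∃ (a b : V) (Q : G.Walk a b), IsGoodPath G P i0 Q := by
  have hI : ({i0}ᶜ : Set (Fin k)).Nontrivial := by
    rw [← Set.one_lt_ncard_iff_nontrivial, Set.ncard_compl, Set.ncard_singleton,
      Nat.card_eq_fintype_card, Fintype.card_fin]
    omega
  obtain ⟨a, b, Q, hQW, hQ, hmin⟩ := exists_minimal_subwalk_meeting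
    (fun m => {x | x ∈ (P m).2.2.support}) {i0}ᶜ
    fun m _ => (hlong i0).exists_common_vertex hG (hlong m)
  obtain ⟨i, j, hi, hj, hij, ha, hb, hinner⟩ := exists_ends_of_minimal_meeting hI hQ hmin
  exact ⟨a, b, Q, isInfixOf_iff_isSubwalk.mpr hQW, i, j, hi, hj, hij, ha, hb, hQ, hinner⟩

end

theorem good_path_exists_general {V : Type*} (G : SimpleGraph V)
    (hG : G.Connected) (k : ℕ) (hk : 3 ≤ k)
    (P : Fin k → Σ u : V, Σ v : V, G.Walk u v)
    (hlong : ∀ i, IsLongestPath G (P i).2.2)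
    (i0 : Fin k) :
    (∃ (a b : V) (Q : G.Walk a b), IsGoodPath G P i0 Q) ∧ 1 ≤ tprime G P i0 := by
  obtain ⟨a, b, Q, hQ⟩ := exists_isGoodPath hG hk hlong i0
  exact ⟨⟨a, b, Q, hQ⟩, one_le_tprime hQ⟩

/-- Every member of a family of `k ≥ 3` longest paths of a connected graph carries
at least one good path, i.e. `t'_𝒫(P) ≥ 1`. -/
theorem good_path_exists {V : Type*} [Fintype V] (G : SimpleGraph V)
    (hG : G.Connected) (k : ℕ) (hk : 3 ≤ k)
    (P : Fin k → Σ u : V, Σ v : V, G.Walk u v)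
    (hinj : Function.Injective P) (hlong : ∀ i, IsLongestPath G (P i).2.2)
    (i0 : Fin k) :
    (∃ (a b : V) (Q : G.Walk a b), IsGoodPath G P i0 Q) ∧ 1 ≤ tprime G P i0 :=
  good_path_exists_general G hG k hk P hlong i0
end

section
/- Suppose that for some k with 3 ≤ k ≤ 6 there exists a connected finite graph G with a set P of k longest paths having no common vertex. Then for every sublinear function g : ℕ → ℝ (i.e., g(n)/n → 0 as n → ∞) there exist a connected finite graph H of some order n and a set Q of k longest paths of H such that f(H,Q) > g(n). (In the paper's construction, H is obtained from G by attaching a pendant edge at each end-vertex of each path of P and then subdividing every edge t times, giving f(H,Q) ≥ t while the order of H is at most n₀ + t(m₀ + 2k), where n₀ and m₀ are the number of vertices and edges of G.) -/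
open SimpleGraph

/-!
Attach a pendant edge at both ends of every `P i` and subdivide each edge of the resulting graph
`G'` into `t + 1` edges. A path of the subdivision `H` runs through the subdivided edges of a path
`q` of `G'` and takes at most `t` further steps at each end. Since `q` has length at most `ℓ(G)`
plus the number of its ends that are leaves, and no further step is possible at a leaf, the extended
paths `P i`, of length `(t + 1) (ℓ(G) + 2)` in `H`, are longest paths of `H`. Every vertex of `G'`
misses one of the extended paths, so `1`-Lipschitz potentials show that the distances from any
vertex of `H` to the extended paths add up to at least `t + 1`, while `H` has `O(t)` vertices.
-/

open Sum Filter Topology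

namespace SimpleGraph

section Pendants

variable {V ι : Type*} (G : SimpleGraph V) (f : ι → V)

def attachPendants : SimpleGraph (V ⊕ ι) where
  Adj
    | inl a, inl b => G.Adj a b
    | inl a, inr i => a = f i
    | inr i, inl a => a = f i
    | inr _, inr _ => False
  symm := ⟨fun
    | inl _, inl _, h => h.symm
    | inl _, inr _, h => h
    | inr _, inl _, h => h⟩
  loopless := ⟨by rintro (a | i) h; exacts [G.irrefl h, h]⟩

variable {G f}

@[simp] lemma attachPendants_adj_inr_inl {a : V} {i : ι} :
    (G.attachPendants f).Adj (inr i) (inl a) ↔ a = f i := Iff.rfl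
@[simp] lemma not_attachPendants_adj_inr_inr {i j : ι} :
    ¬ (G.attachPendants f).Adj (inr i) (inr j) := id

def attachPendantsInl : G →g G.attachPendants f := ⟨inl, id⟩

lemma neighborSet_attachPendants_inr_subsingleton (i : ι) :
    ((G.attachPendants f).neighborSet (inr i)).Subsingleton := by
  rintro (a | j) ha (b | j') hb <;> simp_all [mem_neighborSet]

lemma neighborSet_attachPendants_subsingleton_of_isRight {v : V ⊕ ι} (hv : v.isRight) :
    ((G.attachPendants f).neighborSet v).Subsingleton := by
  rcases v with a | i
  · simp at hv
  · exact neighborSet_attachPendants_inr_subsingleton i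

lemma Connected.attachPendants (hG : G.Connected) : (G.attachPendants f).Connected := by
  have hinl : ∀ a b, (G.attachPendants f).Reachable (inl a) (inl b) := fun a b =>
    (hG a b).map attachPendantsInl
  have hinr : ∀ i, (G.attachPendants f).Reachable (inr i) (inl (f i)) := fun i =>
    Adj.reachable (by simp)
  have := hG.nonempty
  refine Connected.mk ?_
  rintro (a | i) (b | j)
  · exact hinl a b
  · exact (hinl a _).trans (hinr j).symm
  · exact (hinr i).trans (hinl _ b)
  · exact ((hinr i).trans (hinl _ _)).trans (hinr j).symm

def Walk.extendPendants {i j : ι} (p : G.Walk (f i) (f j)) :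
    (G.attachPendants f).Walk (inr i) (inr j) :=
  .cons (show (G.attachPendants f).Adj (inr i) (attachPendantsInl (f i)) from rfl)
    ((p.map attachPendantsInl).concat
      (show (G.attachPendants f).Adj (attachPendantsInl (f j)) (inr j) from rfl))

lemma Walk.length_extendPendants {i j : ι} (p : G.Walk (f i) (f j)) :
    p.extendPendants.length = p.length + 2 := by
  rw [extendPendants, length_cons, length_concat, length_map]

lemma Walk.support_extendPendants {i j : ι} (p : G.Walk (f i) (f j)) :
    p.extendPendants.support = inr i :: (p.support.map inl ++ [inr j]) := by
  rw [extendPendants, support_cons, support_concat, support_map]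
  rfl

lemma Walk.IsPath.extendPendants {i j : ι} (hij : i ≠ j) {p : G.Walk (f i) (f j)}
    (hp : p.IsPath) : p.extendPendants.IsPath := by
  rw [Walk.isPath_def, Walk.support_extendPendants]
  simp [List.nodup_append, hij, hp.support_nodup.map inl_injective]

def induceRangeInlHom : (G.attachPendants f).induce (Set.range inl) →g G where
  toFun x := Sum.elim id f x.1
  map_rel' := by
    rintro ⟨_, a, rfl⟩ ⟨_, b, rfl⟩ h
    exact h

lemma induceRangeInlHom_injective :
    Function.Injective (induceRangeInlHom (G := G) (f := f)) := by
  rintro ⟨_, a, rfl⟩ ⟨_, b, rfl⟩ h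
  cases h
  rfl

variable {L : ℕ}

lemma Walk.IsPath.length_le_of_inl_inl
    (hL : ∀ a b (r : G.Walk a b), r.IsPath → r.length ≤ L) {a b : V}
    {q : (G.attachPendants f).Walk (inl a) (inl b)} (hq : q.IsPath) :
    q.length ≤ L := by
  have hinl : ∀ w ∈ q.support, w ∈ Set.range inl := by
    rintro (c | i) hw
    · exact ⟨c, rfl⟩
    · exact absurd hw (hq.isTrail.not_mem_support_of_subsingleton_neighborSet (by simp)
        (by simp) (neighborSet_attachPendants_inr_subsingleton i))
  have hr : ((q.induce _ hinl).map induceRangeInlHom).IsPath := by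
    refine .map induceRangeInlHom_injective
      ((Walk.isPath_map_iff_of_injective (f := (Embedding.induce _).toHom)
        Subtype.val_injective).mp ?_)
    rwa [Walk.map_induce]
  have := hL _ _ _ hr
  rwa [Walk.length_map, ← Walk.length_map (Embedding.induce _).toHom, Walk.map_induce] at this

lemma Walk.IsPath.length_le_of_start_inr {B : ℕ} {i : ι} {y : V ⊕ ι}
    {q : (G.attachPendants f).Walk (inr i) y} (hq : q.IsPath)
    (hB : ∀ r : (G.attachPendants f).Walk (inl (f i)) y, r.IsPath → r.length ≤ B) :
    q.length ≤ B + 1 := by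
  cases q with
  | nil => simp
  | @cons _ v _ h r =>
    rcases v with c | j
    · obtain rfl : c = f i := h
      exact Nat.succ_le_succ (hB r hq.of_cons)
    · exact absurd h not_attachPendants_adj_inr_inr

lemma Walk.IsPath.length_le_of_start_inl
    (hL : ∀ a b (r : G.Walk a b), r.IsPath → r.length ≤ L) {a : V} {y : V ⊕ ι}
    {q : (G.attachPendants f).Walk (inl a) y} (hq : q.IsPath) :
    q.length ≤ L + y.isRight.toNat := by
  rcases y with b | j
  · simpa using hq.length_le_of_inl_inl hL
  · simpa using hq.reverse.length_le_of_start_inr fun r hr => hr.length_le_of_inl_inl hL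

lemma Walk.IsPath.length_le_attachPendants
    (hL : ∀ a b (r : G.Walk a b), r.IsPath → r.length ≤ L)
    {x y : V ⊕ ι} {q : (G.attachPendants f).Walk x y} (hq : q.IsPath) :
    q.length ≤ L + x.isRight.toNat + y.isRight.toNat := by
  rcases x with a | i
  · simpa using hq.length_le_of_start_inl hL
  · have := hq.length_le_of_start_inr fun r hr => hr.length_le_of_start_inl hL
    simp only [isRight_inr, Bool.toNat_true]
    omega

end Pendants

section Subdivision

variable {X : Type*} {Γ : SimpleGraph X}

lemma adj_out (e : Γ.edgeSet) : Γ.Adj e.1.out.1 e.1.out.2 := by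
  rw [← mem_edgeSet, Sym2.mk, Prod.mk.eta, Quot.out_eq]
  exact e.2

lemma _root_.Sym2.out_mk_eq_or (u v : X) :
    (s(u, v).out.1 = u ∧ s(u, v).out.2 = v) ∨ (s(u, v).out.1 = v ∧ s(u, v).out.2 = u) := by
  rw [← Sym2.eq_iff, Sym2.mk, Prod.mk.eta, Quot.out_eq]

lemma _root_.Sym2.mem_iff_eq_out {e : Sym2 X} {u : X} :
    u ∈ e ↔ u = e.out.1 ∨ u = e.out.2 := by
  conv_lhs => rw [← Quot.out_eq e]
  exact Sym2.mem_iff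

variable (Γ) (t : ℕ)

/-- Every edge `e` of `Γ` becomes a path of length `t + 1` through the new vertices
`inr (e, 0), …, inr (e, t - 1)`, run from `e.out.1` to `e.out.2` (`Quot.out` picks an order of the
ends of `e`). -/
def subdivision : SimpleGraph (X ⊕ (Γ.edgeSet × Fin t)) where
  Adj
    | inl _, inl _ => False
    | inl u, inr (e, j) => (u = e.1.out.1 ∧ j.val = 0) ∨ (u = e.1.out.2 ∧ j.val + 1 = t)
    | inr (e, j), inl u => (u = e.1.out.1 ∧ j.val = 0) ∨ (u = e.1.out.2 ∧ j.val + 1 = t)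
    | inr (e, j), inr (e', j') => e = e' ∧ (j.val + 1 = j'.val ∨ j'.val + 1 = j.val)
  symm := ⟨fun
    | inl _, inr _, h => h
    | inr _, inl _, h => h
    | inr _, inr _, h => ⟨h.1.symm, h.2.symm⟩⟩
  loopless := ⟨fun
    | inl _, h => h
    | inr _, h => by omega⟩

variable {Γ t}

lemma subdivision_adj_inl_inr {u : X} {e : Γ.edgeSet} {j : Fin t} :
    (Γ.subdivision t).Adj (inl u) (inr (e, j)) ↔
      (u = e.1.out.1 ∧ j.val = 0) ∨ (u = e.1.out.2 ∧ j.val + 1 = t) := Iff.rfl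

lemma subdivision_adj_inr_inl {u : X} {e : Γ.edgeSet} {j : Fin t} :
    (Γ.subdivision t).Adj (inr (e, j)) (inl u) ↔
      (u = e.1.out.1 ∧ j.val = 0) ∨ (u = e.1.out.2 ∧ j.val + 1 = t) := Iff.rfl

lemma subdivision_adj_inr_inr {e e' : Γ.edgeSet} {j j' : Fin t} :
    (Γ.subdivision t).Adj (inr (e, j)) (inr (e', j')) ↔
      e = e' ∧ (j.val + 1 = j'.val ∨ j'.val + 1 = j.val) := Iff.rfl

lemma mem_of_subdivision_adj_inl_inr {u : X} {e : Γ.edgeSet} {j : Fin t}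
    (h : (Γ.subdivision t).Adj (inl u) (inr (e, j))) : u ∈ e.1 := by
  rw [Sym2.mem_iff_eq_out]
  rcases h with ⟨h, -⟩ | ⟨h, -⟩
  exacts [Or.inl h, Or.inr h]

noncomputable def walkToInterior (e : Γ.edgeSet) : (j : ℕ) → (hj : j < t) →
    (Γ.subdivision t).Walk (inl e.1.out.1) (inr (e, ⟨j, hj⟩))
  | 0, _ => .cons (subdivision_adj_inl_inr.mpr (Or.inl ⟨rfl, rfl⟩)) .nil
  | j + 1, _ =>
    (walkToInterior e j (by omega)).concat (subdivision_adj_inr_inr.mpr ⟨rfl, Or.inl rfl⟩)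

lemma length_walkToInterior (e : Γ.edgeSet) (j : ℕ) (hj : j < t) :
    (walkToInterior e j hj).length = j + 1 := by
  induction j with
  | zero => rfl
  | succ j ih => simp [walkToInterior, ih]

lemma mem_support_walkToInterior {e : Γ.edgeSet} {j : ℕ} {hj : j < t} {w}
    (hw : w ∈ (walkToInterior e j hj).support) :
    w = inl e.1.out.1 ∨ ∃ i : Fin t, i.val ≤ j ∧ w = inr (e, i) := by
  induction j with
  | zero =>
    simp only [walkToInterior, Walk.support_cons, Walk.support_nil, List.mem_cons,
      List.not_mem_nil, or_false] at hw
    rcases hw with rfl | rfl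
    exacts [Or.inl rfl, Or.inr ⟨_, le_rfl, rfl⟩]
  | succ j ih =>
    rw [walkToInterior, Walk.support_concat, List.mem_append, List.mem_singleton] at hw
    rcases hw with hw | rfl
    · rcases ih hw with h | ⟨i, hi, rfl⟩
      exacts [Or.inl h, Or.inr ⟨i, by omega, rfl⟩]
    · exact Or.inr ⟨_, le_rfl, rfl⟩

lemma isPath_walkToInterior (e : Γ.edgeSet) (j : ℕ) (hj : j < t) :
    (walkToInterior e j hj).IsPath := by
  induction j with
  | zero => simp [walkToInterior]
  | succ j ih =>
    refine (ih _).concat (fun hw => ?_) _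
    rcases mem_support_walkToInterior hw with h | ⟨i, hi, h⟩
    · cases h
    · cases h
      simp at hi

noncomputable def edgeWalk (ht : 0 < t) (e : Γ.edgeSet) :
    (Γ.subdivision t).Walk (inl e.1.out.1) (inl e.1.out.2) :=
  (walkToInterior e (t - 1) (by omega)).concat
    (subdivision_adj_inr_inl.mpr (Or.inr ⟨rfl, Nat.sub_add_cancel ht⟩))

lemma length_edgeWalk (ht : 0 < t) (e : Γ.edgeSet) : (edgeWalk ht e).length = t + 1 := by
  rw [edgeWalk, Walk.length_concat, length_walkToInterior]
  omega

lemma mem_support_edgeWalk {ht : 0 < t} {e : Γ.edgeSet} {w}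
    (hw : w ∈ (edgeWalk ht e).support) :
    w = inl e.1.out.1 ∨ w = inl e.1.out.2 ∨ ∃ i, w = inr (e, i) := by
  rw [edgeWalk, Walk.support_concat, List.mem_append, List.mem_singleton] at hw
  rcases hw with hw | rfl
  · rcases mem_support_walkToInterior hw with h | ⟨i, -, h⟩
    exacts [Or.inl h, Or.inr (Or.inr ⟨i, h⟩)]
  · exact Or.inr (Or.inl rfl)

lemma isPath_edgeWalk (ht : 0 < t) (e : Γ.edgeSet) : (edgeWalk ht e).IsPath := by
  refine (isPath_walkToInterior _ _ _).concat (fun hw => ?_) _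
  rcases mem_support_walkToInterior hw with h | ⟨i, -, h⟩
  · exact (adj_out e).ne (inl_injective h).symm
  · cases h

open Classical in
noncomputable def subdivideAdj (ht : 0 < t) {u v : X} (h : Γ.Adj u v) :
    (Γ.subdivision t).Walk (inl u) (inl v) :=
  if hu : s(u, v).out.1 = u then
    (edgeWalk ht ⟨s(u, v), h⟩).copy (by rw [hu])
      (by rw [((Sym2.out_mk_eq_or u v).resolve_right fun h' => h.ne (hu.symm.trans h'.1)).2])
  else
    (edgeWalk ht ⟨s(u, v), h⟩).reverse.copy
      (by rw [((Sym2.out_mk_eq_or u v).resolve_left (hu ·.1)).2])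
      (by rw [((Sym2.out_mk_eq_or u v).resolve_left (hu ·.1)).1])

lemma length_subdivideAdj (ht : 0 < t) {u v : X} (h : Γ.Adj u v) :
    (subdivideAdj ht h).length = t + 1 := by
  unfold subdivideAdj
  split_ifs <;> simp [length_edgeWalk]

lemma mem_support_subdivideAdj {ht : 0 < t} {u v : X} {h : Γ.Adj u v} {w}
    (hw : w ∈ (subdivideAdj ht h).support) :
    w = inl u ∨ w = inl v ∨ ∃ i, w = inr (⟨s(u, v), h⟩, i) := by
  have key := mem_support_edgeWalk (ht := ht) (e := ⟨s(u, v), h⟩) (w := w)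
  unfold subdivideAdj at hw
  split_ifs at hw with hu
  · rw [Walk.support_copy] at hw
    have := ((Sym2.out_mk_eq_or u v).resolve_right fun h' => h.ne (hu.symm.trans h'.1)).2
    simp only [hu, this] at key
    exact key hw
  · rw [Walk.support_copy, Walk.support_reverse, List.mem_reverse] at hw
    have := (Sym2.out_mk_eq_or u v).resolve_left (hu ·.1)
    simp only [this.1, this.2] at key
    rcases key hw with h | h | h
    exacts [Or.inr (Or.inl h), Or.inl h, Or.inr (Or.inr h)]

lemma isPath_subdivideAdj (ht : 0 < t) {u v : X} (h : Γ.Adj u v) :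
    (subdivideAdj ht h).IsPath := by
  unfold subdivideAdj
  split_ifs
  · exact (Walk.isPath_copy _ _ _).mpr (isPath_edgeWalk ht _)
  · exact (Walk.isPath_copy _ _ _).mpr (isPath_edgeWalk ht _).reverse

noncomputable def Walk.subdivide (ht : 0 < t) {u v : X} :
    Γ.Walk u v → (Γ.subdivision t).Walk (inl u) (inl v)
  | .nil => .nil
  | .cons h p => (subdivideAdj ht h).append (p.subdivide ht)

lemma Walk.length_subdivide (ht : 0 < t) {u v : X} (q : Γ.Walk u v) :
    (q.subdivide ht).length = (t + 1) * q.length := by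
  induction q with
  | nil => rfl
  | cons h p ih =>
    rw [subdivide, length_append, ih, length_subdivideAdj, length_cons]
    ring

lemma Walk.mem_support_subdivide {ht : 0 < t} {u v : X} {q : Γ.Walk u v} {w}
    (hw : w ∈ (q.subdivide ht).support) :
    (∃ z ∈ q.support, w = inl z) ∨
      ∃ (e : Γ.edgeSet) (i : Fin t), w = inr (e, i) ∧ e.1 ∈ q.edges := by
  induction q with
  | nil =>
    rw [subdivide, support_nil, List.mem_singleton] at hw
    exact Or.inl ⟨_, start_mem_support _, hw⟩
  | @cons a b c h p ih =>
    rw [subdivide, mem_support_append_iff] at hw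
    rcases hw with hw | hw
    · rcases mem_support_subdivideAdj hw with rfl | rfl | ⟨i, rfl⟩
      · exact Or.inl ⟨a, start_mem_support _, rfl⟩
      · exact Or.inl ⟨b, by simp, rfl⟩
      · exact Or.inr ⟨_, i, rfl, by simp⟩
    · rcases ih hw with ⟨z, hz, rfl⟩ | ⟨e, i, rfl, he⟩
      · exact Or.inl ⟨z, by simp [hz], rfl⟩
      · exact Or.inr ⟨e, i, rfl, by simp [he]⟩

lemma Walk.IsPath.subdivide (ht : 0 < t) {u v : X} {q : Γ.Walk u v} (hq : q.IsPath) :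
    (q.subdivide ht).IsPath := by
  induction q with
  | nil => simp [Walk.subdivide]
  | @cons a b c h p ih =>
    rw [cons_isPath_iff] at hq
    have hp := ih hq.1
    rw [Walk.subdivide, isPath_def, support_append]
    refine (isPath_subdivideAdj ht h).support_nodup.append hp.support_nodup.tail ?_
    intro w hw₁ hw₂
    rcases mem_support_subdivideAdj hw₁ with rfl | rfl | ⟨i, rfl⟩
    · rcases mem_support_subdivide (List.mem_of_mem_tail hw₂) with
        ⟨z, hz, hza⟩ | ⟨_, _, h', -⟩
      · exact hq.2 (inl_injective hza ▸ hz)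
      · cases h'
    · have := hp.support_nodup
      rw [← cons_tail_support, List.nodup_cons] at this
      exact this.1 hw₂
    · rcases mem_support_subdivide (List.mem_of_mem_tail hw₂) with
        ⟨z, -, h'⟩ | ⟨e, j, h', he⟩
      · cases h'
      · obtain rfl : (⟨s(a, b), h⟩ : Γ.edgeSet) = e := congrArg Prod.fst (inr_injective h')
        exact hq.2 (p.fst_mem_support_of_mem_edges he)

lemma Connected.subdivision (ht : 0 < t) (hΓ : Γ.Connected) : (Γ.subdivision t).Connected := by
  have hinl : ∀ a b, (Γ.subdivision t).Reachable (inl a) (inl b) := fun a b =>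
    (hΓ a b).elim fun q => ⟨q.subdivide ht⟩
  have hinr : ∀ e j, (Γ.subdivision t).Reachable (inl e.1.out.1) (inr (e, j)) := fun e j =>
    ⟨walkToInterior e j.1 j.2⟩
  have := hΓ.nonempty
  refine Connected.mk ?_
  rintro (a | ⟨e, i⟩) (b | ⟨e', j⟩)
  · exact hinl a b
  · exact (hinl a _).trans (hinr e' j)
  · exact (hinr e i).symm.trans (hinl _ b)
  · exact ((hinr e i).symm.trans (hinl _ _)).trans (hinr e' j)

lemma eq_of_mem_of_neighborSet_subsingleton {u : X} (hu : (Γ.neighborSet u).Subsingleton)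
    {e e' : Γ.edgeSet} (he : u ∈ e.1) (he' : u ∈ e'.1) : e = e' := by
  have hadj : ∀ {e : Γ.edgeSet} (he : u ∈ e.1), Sym2.Mem.other he ∈ Γ.neighborSet u :=
    fun {e} he => by rw [mem_neighborSet, ← mem_edgeSet, Sym2.other_spec]; exact e.2
  apply Subtype.ext
  rw [← Sym2.other_spec he, ← Sym2.other_spec he', hu (hadj he) (hadj he')]

lemma neighborSet_subdivision_inl_subsingleton {u : X} (hu : (Γ.neighborSet u).Subsingleton) :
    ((Γ.subdivision t).neighborSet (inl u)).Subsingleton := by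
  rintro (_ | ⟨e, i⟩) h (_ | ⟨e', j⟩) h'
  · exact h.elim
  · exact h.elim
  · exact h'.elim
  obtain rfl := eq_of_mem_of_neighborSet_subsingleton hu
    (mem_of_subdivision_adj_inl_inr h) (mem_of_subdivision_adj_inl_inr h')
  have hne := (adj_out e).ne
  rcases h with ⟨rfl, h⟩ | ⟨rfl, h⟩ <;> rcases h' with ⟨h₁, h'⟩ | ⟨h₁, h'⟩
  all_goals first | exact absurd h₁ hne | exact absurd h₁ hne.symm | (congr; omega)

lemma adj_of_mem_edgeSet_of_ne (e : Γ.edgeSet) {u v : X} (hu : u ∈ e.1) (hv : v ∈ e.1)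
    (huv : u ≠ v) : Γ.Adj u v := by
  rw [← mem_edgeSet, ← (Sym2.mem_and_mem_iff huv).mp ⟨hu, hv⟩]
  exact e.2

open Classical in
noncomputable def Walk.interiorCount {x y : X ⊕ (Γ.edgeSet × Fin t)}
    (R : (Γ.subdivision t).Walk x y) (e : Γ.edgeSet) : ℕ :=
  (Finset.univ.filter fun j : Fin t => inr (e, j) ∈ R.support).card

lemma Walk.interiorCount_le {x y : X ⊕ (Γ.edgeSet × Fin t)} (R : (Γ.subdivision t).Walk x y)
    (e : Γ.edgeSet) : R.interiorCount e ≤ t := by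
  classical
  simpa [interiorCount] using Finset.card_filter_le (Finset.univ : Finset (Fin t)) _

lemma Walk.interiorCount_cons {e : Γ.edgeSet} {j : Fin t} {x y : X ⊕ (Γ.edgeSet × Fin t)}
    {h : (Γ.subdivision t).Adj (inr (e, j)) x} {p : (Γ.subdivision t).Walk x y}
    (hp : inr (e, j) ∉ p.support) : (cons h p).interiorCount e = p.interiorCount e + 1 := by
  classical
  have : (Finset.univ.filter fun i => inr (e, i) ∈ (cons h p).support) =
      insert j (Finset.univ.filter fun i => inr (e, i) ∈ p.support) := by
    ext i
    by_cases hij : i = j <;> simp [hij]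
  rw [interiorCount, interiorCount, this, Finset.card_insert_of_notMem (by simpa using hp)]

def Walk.InInterior {x y : X ⊕ (Γ.edgeSet × Fin t)} (R : (Γ.subdivision t).Walk x y)
    (e : Γ.edgeSet) : Prop :=
  ∀ w ∈ R.support, ∃ j, w = inr (e, j)

/-- `R` runs through the subdivided edges of `path`, with `head` steps before and `tail` steps
after them. Bounding `head` by an interior count rather than by `t` is what lets the induction in
`Walk.IsPath.decomposes` go through. -/
structure BranchPath {x y : X ⊕ (Γ.edgeSet × Fin t)} (R : (Γ.subdivision t).Walk x y) where
  {first last : X}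
  path : Γ.Walk first last
  head : ℕ
  tail : ℕ
  isPath : path.IsPath
  support_subset : ∀ z ∈ path.support, inl z ∈ R.support
  length_le : R.length ≤ head + (t + 1) * path.length + tail
  head_of_inl : ∀ u, x = inl u → u = first ∧ head = 0
  head_of_inr : ∀ e j, x = inr (e, j) → first ∈ e.1 ∧ head ≤ R.interiorCount e
  tail_le : tail ≤ t
  tail_of_inl : ∀ v, y = inl v → v = last ∧ tail = 0

def Walk.Decomposes {x y : X ⊕ (Γ.edgeSet × Fin t)} (R : (Γ.subdivision t).Walk x y) : Prop :=
  (∃ e, R.InInterior e ∧ R.length < R.interiorCount e) ∨ Nonempty (BranchPath R)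

def BranchPath.nil (u : X) : BranchPath (Walk.nil : (Γ.subdivision t).Walk (inl u) (inl u)) where
  path := .nil
  head := 0
  tail := 0
  isPath := .nil
  support_subset := by simp
  length_le := by simp
  head_of_inl _ h := ⟨(inl_injective h).symm, rfl⟩
  head_of_inr _ _ h := by cases h
  tail_le := Nat.zero_le _
  tail_of_inl _ h := ⟨(inl_injective h).symm, rfl⟩

def BranchPath.ofInInterior {u : X} {e : Γ.edgeSet} {x y : X ⊕ (Γ.edgeSet × Fin t)}
    (h : (Γ.subdivision t).Adj (inl u) x) {p : (Γ.subdivision t).Walk x y}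
    (hin : p.InInterior e) (hlen : p.length < p.interiorCount e) : BranchPath (Walk.cons h p) where
  path := .nil
  head := 0
  tail := p.length + 1
  isPath := .nil
  support_subset := by simp
  length_le := by simp
  head_of_inl _ h := ⟨(inl_injective h).symm, rfl⟩
  head_of_inr _ _ h := by cases h
  tail_le := hlen.trans_le (p.interiorCount_le e)
  tail_of_inl v hv := by
    obtain ⟨_, h⟩ := hin _ p.end_mem_support
    cases hv.symm.trans h

def BranchPath.consInl {u : X} {e : Γ.edgeSet} {j : Fin t} {y : X ⊕ (Γ.edgeSet × Fin t)}
    {h : (Γ.subdivision t).Adj (inl u) (inr (e, j))} {p : (Γ.subdivision t).Walk (inr (e, j)) y}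
    (hup : inl u ∉ p.support) (D : BranchPath p) : BranchPath (Walk.cons h p) :=
  have hfirst := D.head_of_inr e j rfl
  have hne : u ≠ D.first := fun h => hup (h ▸ D.support_subset _ D.path.start_mem_support)
  { path := Walk.cons (adj_of_mem_edgeSet_of_ne e (mem_of_subdivision_adj_inl_inr h) hfirst.1 hne)
      D.path
    head := 0
    tail := D.tail
    isPath := D.isPath.cons fun hz => hup (D.support_subset _ hz)
    support_subset := fun z hz => by
      rcases List.mem_cons.mp (Walk.support_cons _ _ ▸ hz) with rfl | hz
      · exact Walk.start_mem_support _
      · exact List.mem_cons_of_mem _ (D.support_subset z hz)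
    length_le := by
      have := D.length_le
      have := hfirst.2.trans (p.interiorCount_le e)
      rw [Walk.length_cons, Walk.length_cons, Nat.mul_succ]
      omega
    head_of_inl _ h := ⟨(inl_injective h).symm, rfl⟩
    head_of_inr _ _ h := by cases h
    tail_le := D.tail_le
    tail_of_inl := D.tail_of_inl }

def BranchPath.consInr {e : Γ.edgeSet} {j : Fin t} {x y : X ⊕ (Γ.edgeSet × Fin t)}
    {h : (Γ.subdivision t).Adj (inr (e, j)) x} {p : (Γ.subdivision t).Walk x y}
    (hxp : inr (e, j) ∉ p.support) (D : BranchPath p) (hfirst : D.first ∈ e.1)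
    (hhead : D.head ≤ p.interiorCount e) : BranchPath (Walk.cons h p) :=
  { D with
    head := D.head + 1
    support_subset := fun z hz => List.mem_cons_of_mem _ (D.support_subset z hz)
    length_le := by
      have := D.length_le
      rw [Walk.length_cons]
      omega
    head_of_inl := fun _ h => by cases h
    head_of_inr := by
      rintro _ _ ⟨⟩
      exact ⟨hfirst, by rw [Walk.interiorCount_cons hxp]; omega⟩ }

lemma Walk.decomposes_cons_inl {u : X} {x y : X ⊕ (Γ.edgeSet × Fin t)}
    (h : (Γ.subdivision t).Adj (inl u) x) {p : (Γ.subdivision t).Walk x y}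
    (hR : (cons h p).IsPath) (hp : p.Decomposes) : (cons h p).Decomposes := by
  rcases x with _ | ⟨e, j⟩
  · exact h.elim
  rcases hp with ⟨e', hin, hlen⟩ | ⟨⟨D⟩⟩
  · exact Or.inr ⟨.ofInInterior h hin hlen⟩
  · exact Or.inr ⟨D.consInl ((cons_isPath_iff _ _).mp hR).2⟩

lemma Walk.decomposes_cons_inr {e : Γ.edgeSet} {j : Fin t} {x y : X ⊕ (Γ.edgeSet × Fin t)}
    (h : (Γ.subdivision t).Adj (inr (e, j)) x) {p : (Γ.subdivision t).Walk x y}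
    (hR : (cons h p).IsPath) (hp : p.Decomposes) : (cons h p).Decomposes := by
  have hxp := ((cons_isPath_iff _ _).mp hR).2
  rcases x with w | ⟨e', j'⟩
  · rcases hp with ⟨e', hin, -⟩ | ⟨⟨D⟩⟩
    · obtain ⟨_, h'⟩ := hin _ p.start_mem_support
      cases h'
    obtain ⟨hw, hhead⟩ := D.head_of_inl _ rfl
    exact Or.inr ⟨D.consInr hxp (hw ▸ mem_of_subdivision_adj_inl_inr h.symm) (by omega)⟩
  obtain ⟨rfl, -⟩ := subdivision_adj_inr_inr.mp h
  rcases hp with ⟨e', hin, hlen⟩ | ⟨⟨D⟩⟩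
  · obtain ⟨_, h'⟩ := hin _ p.start_mem_support
    obtain rfl : e = e' := congrArg Prod.fst (inr_injective h')
    refine Or.inl ⟨e, ?_, by rw [length_cons, interiorCount_cons hxp]; omega⟩
    intro w hw
    rcases List.mem_cons.mp (support_cons _ _ ▸ hw) with rfl | hw
    exacts [⟨j, rfl⟩, hin w hw]
  · obtain ⟨hfirst, hhead⟩ := D.head_of_inr e j' rfl
    exact Or.inr ⟨D.consInr hxp hfirst hhead⟩

lemma Walk.IsPath.decomposes {x y : X ⊕ (Γ.edgeSet × Fin t)} {R : (Γ.subdivision t).Walk x y}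
    (hR : R.IsPath) : R.Decomposes := by
  induction R with
  | @nil x =>
    rcases x with u | ⟨e, j⟩
    · exact Or.inr ⟨.nil u⟩
    · classical
      exact Or.inl ⟨e, by simp [InInterior], Finset.card_pos.mpr ⟨j, by simp⟩⟩
  | @cons x _ _ h p ih =>
    rcases x with u | ⟨e, j⟩
    · exact decomposes_cons_inl h hR (ih hR.of_cons)
    · exact decomposes_cons_inr h hR (ih hR.of_cons)

lemma Walk.IsPath.length_eq_zero_of_eq {u v : X} {q : Γ.Walk u v} (hq : q.IsPath)
    (huv : u = v) : q.length = 0 := by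
  subst huv
  exact (isPath_iff_nil.mp hq).length_eq_zero

lemma BranchPath.head_le {x y : X ⊕ (Γ.edgeSet × Fin t)} {R : (Γ.subdivision t).Walk x y}
    (D : BranchPath R) : D.head ≤ t := by
  rcases x with u | ⟨e, j⟩
  · exact (D.head_of_inl u rfl).2.trans_le (Nat.zero_le _)
  · exact (D.head_of_inr e j rfl).2.trans (R.interiorCount_le e)

lemma BranchPath.head_eq_zero_of_subsingleton {x y : X ⊕ (Γ.edgeSet × Fin t)}
    {R : (Γ.subdivision t).Walk x y} (hR : R.IsPath) (D : BranchPath R)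
    (hD : D.path.length ≠ 0) (hleaf : (Γ.neighborSet D.first).Subsingleton) : D.head = 0 := by
  by_contra hhead
  have hx : inl D.first ≠ x := fun h => hhead (D.head_of_inl _ h.symm).2
  have hy : inl D.first ≠ y := fun h =>
    hD (D.isPath.length_eq_zero_of_eq (D.tail_of_inl _ h.symm).1)
  exact hR.isTrail.not_mem_support_of_subsingleton_neighborSet hx hy
    (neighborSet_subdivision_inl_subsingleton hleaf) (D.support_subset _ D.path.start_mem_support)

lemma BranchPath.tail_eq_zero_of_subsingleton {x y : X ⊕ (Γ.edgeSet × Fin t)}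
    {R : (Γ.subdivision t).Walk x y} (hR : R.IsPath) (D : BranchPath R)
    (hD : D.path.length ≠ 0) (hleaf : (Γ.neighborSet D.last).Subsingleton) : D.tail = 0 := by
  by_contra htail
  have hx : inl D.last ≠ x := fun h =>
    hD (D.isPath.length_eq_zero_of_eq (D.head_of_inl _ h.symm).1.symm)
  have hy : inl D.last ≠ y := fun h => htail (D.tail_of_inl _ h.symm).2
  exact hR.isTrail.not_mem_support_of_subsingleton_neighborSet hx hy
    (neighborSet_subdivision_inl_subsingleton hleaf) (D.support_subset _ D.path.end_mem_support)

variable (t) in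
open Classical in
noncomputable def Walk.branchPotential {a b : X} (q : Γ.Walk a b) (u : X) : ℕ :=
  if u ∈ q.support then 0 else t + 1

open Classical in
noncomputable def Walk.potential {a b : X} (q : Γ.Walk a b) :
    X ⊕ (Γ.edgeSet × Fin t) → ℕ
  | inl u => q.branchPotential t u
  | inr (e, j) => if e.1 ∈ q.edges then 0 else
      min (q.branchPotential t e.1.out.1 + j + 1) (q.branchPotential t e.1.out.2 + (t - j))

lemma Walk.branchPotential_le {a b : X} (q : Γ.Walk a b) (u : X) :
    q.branchPotential t u ≤ t + 1 := by
  unfold branchPotential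
  split_ifs <;> omega

lemma Walk.branchPotential_of_mem {a b : X} {q : Γ.Walk a b} {u : X} (hu : u ∈ q.support) :
    q.branchPotential t u = 0 := if_pos hu

lemma Walk.branchPotential_of_not_mem {a b : X} {q : Γ.Walk a b} {u : X}
    (hu : u ∉ q.support) : q.branchPotential t u = t + 1 := if_neg hu

lemma Walk.potential_inr_of_not_mem {a b : X} {q : Γ.Walk a b} {e : Γ.edgeSet}
    (he : e.1 ∉ q.edges) (j : Fin t) : q.potential (inr (e, j)) =
      min (q.branchPotential t e.1.out.1 + j + 1) (q.branchPotential t e.1.out.2 + (t - j)) :=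
  if_neg he

lemma Walk.potential_le_of_adj {a b : X} (q : Γ.Walk a b)
    {w w' : X ⊕ (Γ.edgeSet × Fin t)} (h : (Γ.subdivision t).Adj w w') :
    q.potential w ≤ q.potential w' + 1 := by
  have hc := q.branchPotential_le (t := t)
  rcases w with u | ⟨e, j⟩ <;> rcases w' with u' | ⟨e', j'⟩
  · exact h.elim
  · by_cases he : e'.1 ∈ q.edges
    · have hu : u ∈ q.support :=
        mem_support_of_mem_edges he (mem_of_subdivision_adj_inl_inr h)
      simp [potential, branchPotential_of_mem hu]
    · rw [potential_inr_of_not_mem he]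
      have := hc e'.1.out.1
      have := hc e'.1.out.2
      rcases h with ⟨rfl, _⟩ | ⟨rfl, _⟩ <;> simp only [potential] <;> omega
  · by_cases he : e.1 ∈ q.edges
    · simp [potential, he]
    · rw [potential_inr_of_not_mem he]
      rcases h with ⟨rfl, _⟩ | ⟨rfl, _⟩ <;> simp only [potential] <;> omega
  · obtain ⟨rfl, _⟩ := subdivision_adj_inr_inr.mp h
    by_cases he : e.1 ∈ q.edges
    · simp [potential, he]
    · rw [potential_inr_of_not_mem he, potential_inr_of_not_mem he]
      omega

lemma Walk.potential_eq_zero_of_mem_support_subdivide {ht : 0 < t} {a b : X} {q : Γ.Walk a b}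
    {w : X ⊕ (Γ.edgeSet × Fin t)} (hw : w ∈ (q.subdivide ht).support) :
    q.potential w = 0 := by
  rcases mem_support_subdivide hw with ⟨z, hz, rfl⟩ | ⟨e, j, rfl, he⟩
  · exact branchPotential_of_mem hz
  · exact if_pos he

lemma Walk.sub_le_potential {a b : X} {q : Γ.Walk a b} {e : Γ.edgeSet} (j : Fin t)
    (he : e.1.out.1 ∉ q.support) : t - j ≤ q.potential (inr (e, j)) := by
  rw [potential_inr_of_not_mem fun h => he (mem_support_of_mem_edges h (Sym2.out_fst_mem _)),
    branchPotential_of_not_mem he]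
  omega

lemma Walk.succ_le_potential {a b : X} {q : Γ.Walk a b} {e : Γ.edgeSet} (j : Fin t)
    (he : e.1.out.2 ∉ q.support) : j + 1 ≤ q.potential (inr (e, j)) := by
  rw [potential_inr_of_not_mem fun h => he (mem_support_of_mem_edges h (Sym2.out_snd_mem _)),
    branchPotential_of_not_mem he]
  omega

lemma Walk.le_potential_of_not_mem {a b : X} {q : Γ.Walk a b} {e : Γ.edgeSet} (j : Fin t)
    (he₁ : e.1.out.1 ∉ q.support) (he₂ : e.1.out.2 ∉ q.support) :
    t + 1 ≤ q.potential (inr (e, j)) := by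
  rw [potential_inr_of_not_mem fun h => he₁ (mem_support_of_mem_edges h (Sym2.out_fst_mem _)),
    branchPotential_of_not_mem he₁, branchPotential_of_not_mem he₂]
  omega

lemma le_sum_potential {ι : Type*} [Fintype ι] (q : ι → Σ a b : X, Γ.Walk a b)
    (hcover : ∀ u, ∃ i, u ∉ (q i).2.2.support) (w : X ⊕ (Γ.edgeSet × Fin t)) :
    t + 1 ≤ ∑ i, (q i).2.2.potential w := by
  classical
  have hsingle : ∀ i, (q i).2.2.potential w ≤ ∑ i, (q i).2.2.potential w := fun i =>
    Finset.single_le_sum (f := fun i => (q i).2.2.potential w) (fun _ _ => Nat.zero_le _)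
      (Finset.mem_univ i)
  rcases w with u | ⟨e, j⟩
  · obtain ⟨i, hi⟩ := hcover u
    exact (Walk.branchPotential_of_not_mem hi).ge.trans (hsingle i)
  obtain ⟨i, hi⟩ := hcover e.1.out.1
  by_cases hi' : e.1.out.2 ∈ (q i).2.2.support
  · obtain ⟨i', hi''⟩ := hcover e.1.out.2
    have hne : i ≠ i' := by rintro rfl; exact hi'' hi'
    have := Walk.sub_le_potential j hi
    have := Walk.succ_le_potential j hi''
    have := j.2
    calc t + 1 ≤ (q i).2.2.potential (inr (e, j)) + (q i').2.2.potential (inr (e, j)) := by omega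
      _ = ∑ l ∈ {i, i'}, (q l).2.2.potential (inr (e, j)) :=
        (Finset.sum_pair (f := fun l => (q l).2.2.potential (inr (e, j))) hne).symm
      _ ≤ _ := Finset.sum_le_sum_of_subset (Finset.subset_univ _)
  · exact (Walk.le_potential_of_not_mem j hi hi').trans (hsingle i)

end Subdivision

theorem Walk.IsPath.length_le_subdivision_attachPendants {V ι : Type*} {G : SimpleGraph V}
    {f : ι → V} {L t : ℕ} (hL : ∀ a b (r : G.Walk a b), r.IsPath → r.length ≤ L)
    {x y : (V ⊕ ι) ⊕ ((G.attachPendants f).edgeSet × Fin t)}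
    {R : ((G.attachPendants f).subdivision t).Walk x y} (hR : R.IsPath) :
    R.length ≤ (t + 1) * (L + 2) := by
  rcases hR.decomposes with ⟨e, -, hlen⟩ | ⟨⟨D⟩⟩
  · have := R.interiorCount_le e
    nlinarith
  have hlen := D.length_le
  have hhead := D.head_le
  have htail := D.tail_le
  rcases Nat.eq_zero_or_pos D.path.length with h0 | hpos
  · rw [h0] at hlen
    nlinarith
  have hpath := D.isPath.length_le_attachPendants hL
  have hfirst : D.first.isRight → D.head = 0 := fun h => D.head_eq_zero_of_subsingleton hR
    hpos.ne' (neighborSet_attachPendants_subsingleton_of_isRight h)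
  have hlast : D.last.isRight → D.tail = 0 := fun h => D.tail_eq_zero_of_subsingleton hR
    hpos.ne' (neighborSet_attachPendants_subsingleton_of_isRight h)
  generalize D.first.isRight = c₁ at hpath hfirst
  generalize D.last.isRight = c₂ at hpath hlast
  cases c₁ <;> cases c₂ <;>
    simp only [Bool.toNat_false, Bool.toNat_true, forall_const, add_zero] at hpath hfirst hlast <;>
    nlinarith

end SimpleGraph

open SimpleGraph

lemma SimpleGraph.Walk.le_add_length_of_lipschitz {W : Type*} {H : SimpleGraph W} {φ : W → ℕ}
    (hφ : ∀ a b, H.Adj a b → φ a ≤ φ b + 1) {x y : W} (R : H.Walk x y) :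
    φ x ≤ φ y + R.length := by
  induction R with
  | nil => simp
  | cons h _ ih =>
    have := hφ _ _ h
    rw [Walk.length_cons]
    omega

lemma le_distToWalk_of_lipschitz {W : Type*} {H : SimpleGraph W} (hH : H.Connected)
    {φ : W → ℕ} (hφ : ∀ a b, H.Adj a b → φ a ≤ φ b + 1) {u v : W} {w : H.Walk u v}
    (hw : ∀ y ∈ w.support, φ y = 0) (x : W) : φ x ≤ distToWalk H x w := by
  obtain ⟨y, hy, hd⟩ : ∃ y ∈ w.support, H.dist x y = distToWalk H x w :=
    Nat.sInf_mem (s := {d | ∃ y ∈ w.support, H.dist x y = d})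
      ⟨_, u, w.start_mem_support, rfl⟩
  obtain ⟨R, hR⟩ := hH.exists_walk_length_eq_dist x y
  have := R.le_add_length_of_lipschitz hφ
  rw [hw y hy, hR, hd] at this
  omega

lemma le_pdf {W : Type*} [Nonempty W] {H : SimpleGraph W} {k : ℕ}
    (Q : Fin k → Σ u v : W, H.Walk u v) {c : ℕ}
    (h : ∀ x, c ≤ ∑ i, distToWalk H x (Q i).2.2) :
    c ≤ pdf H Q :=
  le_csInf ⟨_, Classical.arbitrary W, rfl⟩ (by rintro _ ⟨x, rfl⟩; exact h x)

theorem le_pdf_subdivision {X : Type*} {Γ : SimpleGraph X} {t : ℕ} (ht : 0 < t)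
    (hΓ : Γ.Connected) {k : ℕ} (q : Fin k → Σ a b : X, Γ.Walk a b)
    (hcover : ∀ u, ∃ i, u ∉ (q i).2.2.support) :
    t + 1 ≤ pdf (Γ.subdivision t) (fun i => ⟨_, _, (q i).2.2.subdivide ht⟩) := by
  have : Nonempty X := hΓ.nonempty
  refine le_pdf _ fun x => (le_sum_potential q hcover x).trans (Finset.sum_le_sum fun i _ => ?_)
  exact le_distToWalk_of_lipschitz (hΓ.subdivision ht)
    (fun a b h => (q i).2.2.potential_le_of_adj h)
    (fun y hy => Walk.potential_eq_zero_of_mem_support_subdivide hy) x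

lemma eventually_lt_of_tendsto_div_zero {g : ℕ → ℝ}
    (hg : Tendsto (fun n : ℕ => g n / n) atTop (𝓝 0)) (A B : ℕ) :
    ∀ᶠ t : ℕ in atTop, g (A + B * t) < t := by
  rcases Nat.eq_zero_or_pos B with rfl | hB
  · simpa using tendsto_natCast_atTop_atTop.eventually_gt_atTop (g A)
  have hn : Tendsto (fun t : ℕ => A + B * t) atTop atTop :=
    tendsto_atTop_mono (fun t => by simp only [id]; nlinarith) tendsto_id
  have hε : (0 : ℝ) < 1 / (B + 1) := by positivity
  filter_upwards [(hg.comp hn).eventually (gt_mem_nhds hε), eventually_ge_atTop (A + 1)]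
    with t h1 h2
  have hA : (A : ℝ) + 1 ≤ t := by exact_mod_cast h2
  have hpos : (0 : ℝ) < A + B * t := by
    have : (1 : ℝ) ≤ B := by exact_mod_cast hB
    nlinarith
  simp only [Function.comp_apply, Nat.cast_add, Nat.cast_mul] at h1
  rw [div_lt_iff₀ hpos] at h1
  calc g (A + B * t) < 1 / (B + 1) * (A + B * t) := by exact_mod_cast h1
    _ ≤ t := by
      rw [div_mul_eq_mul_div, one_mul, div_le_iff₀ (by positivity)]
      nlinarith

section Construction

variable {V : Type*} {G : SimpleGraph V} {k : ℕ}

def pathEnds (P : Fin k → Σ u v : V, G.Walk u v) (p : Fin k × Bool) : V :=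
  cond p.2 (P p.1).2.1 (P p.1).1

def extendedPath (P : Fin k → Σ u v : V, G.Walk u v) (i : Fin k) :
    (G.attachPendants (pathEnds P)).Walk (inr (i, false)) (inr (i, true)) :=
  Walk.extendPendants (f := pathEnds P) (P i).2.2

lemma length_extendedPath (P : Fin k → Σ u v : V, G.Walk u v) (i : Fin k) :
    (extendedPath P i).length = (P i).2.2.length + 2 :=
  Walk.length_extendPendants _

lemma isPath_extendedPath {P : Fin k → Σ u v : V, G.Walk u v} {i : Fin k}
    (hP : (P i).2.2.IsPath) : (extendedPath P i).IsPath :=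
  hP.extendPendants (by simp)

lemma support_extendedPath (P : Fin k → Σ u v : V, G.Walk u v) (i : Fin k) :
    (extendedPath P i).support =
      inr (i, false) :: ((P i).2.2.support.map inl ++ [inr (i, true)]) :=
  Walk.support_extendPendants _

lemma exists_not_mem_support_extendedPath (P : Fin k → Σ u v : V, G.Walk u v)
    (hnc : ∀ x : V, ∃ i, x ∉ (P i).2.2.support) (u : V ⊕ (Fin k × Bool)) :
    ∃ i, u ∉ (extendedPath P i).support := by
  rcases u with v | ⟨i, b⟩
  · obtain ⟨i, hi⟩ := hnc v
    exact ⟨i, by simpa [support_extendedPath] using hi⟩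
  · obtain ⟨i', hi'⟩ := hnc (P i).1
    have hne : i ≠ i' := by
      rintro rfl
      exact hi' (P i).2.2.start_mem_support
    refine ⟨i', ?_⟩
    simp [support_extendedPath, hne]

end Construction

theorem no_sublinear_bound_of_counterexample_general (k : ℕ)
    {V : Type} [Fintype V] (G : SimpleGraph V) (hG : G.Connected)
    (P : Fin k → Σ u : V, Σ v : V, G.Walk u v)
    (hlong : ∀ i, IsLongestPath G (P i).2.2)
    (hnc : ¬ ∃ x : V, ∀ i, x ∈ (P i).2.2.support) :
    ∀ g : ℕ → ℝ, Filter.Tendsto (fun n : ℕ => g n / (n : ℝ)) Filter.atTop (nhds 0) →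
      ∃ (W : Type) (instW : Fintype W) (H : SimpleGraph W),
        H.Connected ∧
        ∃ Q : Fin k → Σ u : W, Σ v : W, H.Walk u v,
          Function.Injective Q ∧ (∀ i, IsLongestPath H (Q i).2.2) ∧
          g (@Fintype.card W instW) < (pdf H Q : ℝ) := by
  classical
  intro g hg
  push Not at hnc
  set G' := G.attachPendants (pathEnds P)
  obtain ⟨t, hgt, ht⟩ := ((eventually_lt_of_tendsto_div_zero hg
    (Fintype.card (V ⊕ (Fin k × Bool))) (Fintype.card G'.edgeSet)).and
    (eventually_gt_atTop 0)).exists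
  refine ⟨_, inferInstance, G'.subdivision t, hG.attachPendants.subdivision ht,
    fun i => ⟨_, _, (extendedPath P i).subdivide ht⟩, ?_,
    fun i => ⟨?_, fun a b R hR => ?_⟩, ?_⟩
  · intro i j h
    simpa using congrArg Sigma.fst h
  · exact (isPath_extendedPath (hlong i).1).subdivide ht
  · rw [Walk.length_subdivide, length_extendedPath]
    exact hR.length_le_subdivision_attachPendants (hlong i).2
  · have hpdf := le_pdf_subdivision ht hG.attachPendants (fun i => ⟨_, _, extendedPath P i⟩)
      (exists_not_mem_support_extendedPath P hnc)
    rw [Fintype.card_sum, Fintype.card_prod, Fintype.card_fin]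
    calc g _ < t := hgt
      _ < t + 1 := by linarith
      _ ≤ _ := by exact_mod_cast hpdf

/-- If for some `3 ≤ k ≤ 6` there is a connected graph with `k` longest paths having no
common vertex, then no sublinear function `g` bounds the path-distance-function: for every
sublinear `g` there is a connected graph `H` of some order `n` with a family `𝒬` of `k`
longest paths such that `f(H,𝒬) > g(n)`. -/
theorem no_sublinear_bound_of_counterexample (k : ℕ) (hk3 : 3 ≤ k) (hk6 : k ≤ 6)
    {V : Type} [Fintype V] (G : SimpleGraph V) (hG : G.Connected)
    (P : Fin k → Σ u : V, Σ v : V, G.Walk u v)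
    (hinj : Function.Injective P) (hlong : ∀ i, IsLongestPath G (P i).2.2)
    (hnc : ¬ ∃ x : V, ∀ i, x ∈ (P i).2.2.support) :
    ∀ g : ℕ → ℝ, Filter.Tendsto (fun n : ℕ => g n / (n : ℝ)) Filter.atTop (nhds 0) →
      ∃ (W : Type) (instW : Fintype W) (H : SimpleGraph W),
        H.Connected ∧
        ∃ Q : Fin k → Σ u : W, Σ v : W, H.Walk u v,
          Function.Injective Q ∧ (∀ i, IsLongestPath H (Q i).2.2) ∧
          g (@Fintype.card W instW) < (pdf H Q : ℝ) :=
  no_sublinear_bound_of_counterexample_general k G hG P hlong hnc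
end

section
/- There exists a connected finite graph G on 17 vertices and a set P of 7 longest paths of G such that the paths of P have no common vertex; consequently f(G,P) ≥ 1, so the path-distance-ratio satisfies d₇ ≥ 1/17 for the class of connected graphs. -/
open SimpleGraph

/-!
Skupień's graph has 17 vertices and its longest paths have 12 edges; the latter is certified by
enumerating all vertex sequences of paths, extending them one vertex at a time, and finding none
with 13 edges. Seven of its longest paths have no common vertex. In a connected graph the distance
from `x` to a path vanishes only when `x` lies on it, so every vertex misses some path and
contributes at least `1` to `f(G, 𝒫)`.
-/

namespace SimpleGraph

variable {V : Type*} {G : SimpleGraph V}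

theorem connected_of_forall_mem_support {u v : V} (p : G.Walk u v) (h : ∀ x, x ∈ p.support) :
    G.Connected := by
  classical
  have : Nonempty V := ⟨u⟩
  have hreach (x : V) : G.Reachable u x := ⟨p.takeUntil x (h x)⟩
  exact ⟨fun x y => (hreach x).symm.trans (hreach y)⟩

theorem exists_mem_support_dist_eq_distToWalk (x : V) {u v : V} (w : G.Walk u v) :
    ∃ y ∈ w.support, G.dist x y = distToWalk G x w :=
  Nat.sInf_mem (s := {d | ∃ y ∈ w.support, G.dist x y = d}) ⟨_, u, w.start_mem_support, rfl⟩

theorem Connected.mem_support_of_distToWalk_eq_zero (hG : G.Connected) {x u v : V}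
    {w : G.Walk u v} (h : distToWalk G x w = 0) : x ∈ w.support := by
  obtain ⟨y, hy, hxy⟩ := exists_mem_support_dist_eq_distToWalk x w
  rwa [hG.dist_eq_zero_iff.mp (hxy.trans h)]

theorem Connected.one_le_pdf (hG : G.Connected) {k : ℕ}
    {P : Fin k → Σ u : V, Σ v : V, G.Walk u v}
    (hP : ¬ ∃ x : V, ∀ i, x ∈ (P i).2.2.support) : 1 ≤ pdf G P := by
  obtain ⟨x, hx⟩ : pdf G P ∈ {s : ℕ | ∃ x : V, s = ∑ i, distToWalk G x (P i).2.2} :=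
    Nat.sInf_mem ⟨_, hG.nonempty.some, rfl⟩
  refine Nat.one_le_iff_ne_zero.mpr fun h0 => hP ⟨x, fun i => ?_⟩
  have hsum : ∑ i, distToWalk G x (P i).2.2 = 0 := hx ▸ h0
  exact hG.mem_support_of_distToWalk_eq_zero (Finset.sum_eq_zero_iff.mp hsum i (Finset.mem_univ i))

section PathEnumeration

variable [DecidableEq V] (nbrs : V → List V) (vs : List V)

def extendPaths (ls : List (List V)) : List (List V) :=
  ls.flatMap fun
    | [] => []
    | a :: l => ((nbrs a).filter (· ∉ a :: l)).map (· :: a :: l)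

/-- With `nbrs` listing all neighbours and `vs` all vertices, this contains the support of every
path with `n` edges (`Walk.support_mem_pathSupports`), so `pathSupports nbrs vs n = []` is a
decidable certificate that no path is that long. -/
def pathSupports : ℕ → List (List V)
  | 0 => vs.map ([·])
  | n + 1 => extendPaths nbrs (pathSupports n)

theorem pathSupports_eq_nil_of_le {m n : ℕ} (h : pathSupports nbrs vs m = []) (hmn : m ≤ n) :
    pathSupports nbrs vs n = [] := by
  induction n, hmn using Nat.le_induction with
  | base => exact h
  | succ n _ ih => rw [pathSupports, ih]; rfl

variable {nbrs vs}

theorem Walk.support_mem_pathSupports (hnbrs : ∀ a b, G.Adj a b → b ∈ nbrs a)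
    (hvs : ∀ v, v ∈ vs) {u v : V} :
    ∀ p : G.Walk u v, p.IsPath → p.support ∈ pathSupports nbrs vs p.length
  | .nil, _ => List.mem_map.mpr ⟨u, hvs u, rfl⟩
  | .cons (v := w) hadj q, hp => by
    obtain ⟨hq, hu⟩ := Walk.cons_isPath_iff hadj q |>.mp hp
    obtain ⟨t, ht⟩ : ∃ t, q.support = w :: t := ⟨_, q.cons_tail_support.symm⟩
    have ih := q.support_mem_pathSupports hnbrs hvs hq
    rw [ht] at ih hu
    rw [Walk.support_cons, ht]
    refine List.mem_flatMap.mpr ⟨w :: t, ih, List.mem_map.mpr ⟨u, ?_, rfl⟩⟩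
    exact List.mem_filter.mpr ⟨hnbrs w u hadj.symm, decide_eq_true hu⟩

theorem isLongestPath_of_pathSupports_eq_nil (hnbrs : ∀ a b, G.Adj a b → b ∈ nbrs a)
    (hvs : ∀ v, v ∈ vs) {u v : V} {p : G.Walk u v} (hp : p.IsPath)
    (h : pathSupports nbrs vs (p.length + 1) = []) : IsLongestPath G p := by
  refine ⟨hp, fun a b q hq => ?_⟩
  by_contra! hlt
  have hmem := q.support_mem_pathSupports hnbrs hvs hq
  rw [pathSupports_eq_nil_of_le nbrs vs h hlt] at hmem
  exact List.not_mem_nil hmem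

end PathEnumeration

end SimpleGraph

def skupienNbrs : Fin 17 → List (Fin 17) :=
  ![[7, 1], [13, 0, 12], [12, 15, 14], [4, 14, 16], [3, 8], [10, 9], [13, 16, 15], [0], [4], [5],
    [5, 15], [14, 13], [2, 1], [1, 11, 6], [11, 2, 3], [2, 10, 6], [6, 3]]

def skupienGraph : SimpleGraph (Fin 17) where
  Adj a b := b ∈ skupienNbrs a
  symm := ⟨fun a b =>
    (by decide : ∀ a b : Fin 17, b ∈ skupienNbrs a → a ∈ skupienNbrs b) a b⟩
  loopless := ⟨fun a => (by decide : ∀ a : Fin 17, a ∉ skupienNbrs a) a⟩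

instance : DecidableRel skupienGraph.Adj := fun a b =>
  inferInstanceAs (Decidable (b ∈ skupienNbrs a))

theorem skupienGraph_connected : skupienGraph.Connected :=
  connected_of_forall_mem_support
    (.ofSupport [7, 0, 1, 12, 2, 14, 11, 13, 6, 16, 3, 4, 8, 4, 3, 16, 6, 15, 10, 5, 9]
      (List.cons_ne_nil _ _) (by decide))
    (by simp only [Walk.support_ofSupport]; decide)

theorem pathSupports_skupienNbrs_thirteen :
    pathSupports skupienNbrs (List.finRange 17) 13 = [] := by
  decide

def skupienPathSupports : Fin 7 → List (Fin 17) :=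
  ![[7, 0, 1, 13, 11, 14, 3, 16, 6, 15, 10, 5, 9],
    [8, 4, 3, 16, 6, 13, 11, 14, 2, 15, 10, 5, 9],
    [7, 0, 1, 12, 2, 14, 11, 13, 6, 16, 3, 4, 8],
    [8, 4, 3, 14, 11, 13, 1, 12, 2, 15, 10, 5, 9],
    [7, 0, 1, 12, 2, 14, 11, 13, 6, 15, 10, 5, 9],
    [7, 0, 1, 12, 2, 14, 3, 16, 6, 15, 10, 5, 9],
    [8, 4, 3, 16, 6, 13, 1, 12, 2, 15, 10, 5, 9]]

theorem skupienPathSupports_ne_nil : ∀ i, skupienPathSupports i ≠ [] := by decide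

theorem skupienPathSupports_isChain : ∀ i, (skupienPathSupports i).IsChain skupienGraph.Adj := by
  decide

def skupienPaths (i : Fin 7) : Σ u : Fin 17, Σ v : Fin 17, skupienGraph.Walk u v :=
  ⟨_, _, .ofSupport _ (skupienPathSupports_ne_nil i) (skupienPathSupports_isChain i)⟩

theorem skupienPaths_support (i : Fin 7) : (skupienPaths i).2.2.support = skupienPathSupports i :=
  Walk.support_ofSupport _ _

theorem skupienPaths_injective : Function.Injective skupienPaths := fun i j h => by
  have hsupp := congrArg (fun P => P.2.2.support) h
  simp only [skupienPaths_support] at hsupp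
  revert i j
  decide

theorem skupienPaths_isLongestPath (i : Fin 7) :
    IsLongestPath skupienGraph (skupienPaths i).2.2 := by
  have hnodup : ∀ i, (skupienPathSupports i).Nodup := by decide
  have hlength : ∀ i, (skupienPathSupports i).length = 13 := by decide
  refine isLongestPath_of_pathSupports_eq_nil (fun _ _ h => h) List.mem_finRange
    (Walk.isPath_def _ |>.mpr ((skupienPaths_support i).symm ▸ hnodup i)) ?_
  rw [skupienPaths, Walk.length_ofSupport, hlength]
  exact pathSupports_skupienNbrs_thirteen

theorem skupienPaths_no_common_vertex : ¬ ∃ x, ∀ i, x ∈ (skupienPaths i).2.2.support := by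
  simp only [skupienPaths_support]
  decide

/-- Skupień's example: there is a connected graph on `17` vertices with `7` longest paths
having no common vertex; consequently `f(G,𝒫) ≥ 1`, so `d₇ ≥ 1/17`. -/
theorem skupien_seven_paths :
    ∃ (V : Type) (instV : Fintype V) (G : SimpleGraph V),
      G.Connected ∧ @Fintype.card V instV = 17 ∧
      ∃ P : Fin 7 → Σ u : V, Σ v : V, G.Walk u v,
        Function.Injective P ∧ (∀ i, IsLongestPath G (P i).2.2) ∧
        (¬ ∃ x : V, ∀ i, x ∈ (P i).2.2.support) ∧
        1 ≤ pdf G P :=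
  ⟨Fin 17, inferInstance, skupienGraph, skupienGraph_connected, Fintype.card_fin 17,
    skupienPaths, skupienPaths_injective, skupienPaths_isLongestPath,
    skupienPaths_no_common_vertex,
    skupienGraph_connected.one_le_pdf skupienPaths_no_common_vertex⟩
end
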